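/- arXiv:2212.06901 — 8 statements merged into one kernel-verified Lean document; each statement's English description precedes it below -/
import Mathlib

section
/- If a finite simple graph Γ admits a tree 2-spanner T, then the Bestvina–Brady group BB(Γ) is isomorphic to the right-angled Artin group A(T*), where T* is the dual graph of T. In particular, BB(Γ) is a right-angled Artin group. -/
/-!
Root the tree `T` at a vertex `r`: every edge of `T` is `{v, parent v}` for a unique `v ≠ r`.
Let `y v ∈ A(T*)` be the product of the edge generators along the path from `v` to `r` (this is
`(pathWord (-1) v)⁻¹`). Sending the generator `x` of the edge `{v, parent v}` to
`(y (parent v))⁻¹ * x * y (parent v)` defines an automorphism `α` of `A(T*)`, and `v ↦ (y v, 1)`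
defines a homomorphism `A(Γ) → A(T*) ⋊_α ℤ`. Indeed, for an edge `vw` of `Γ` the 2-spanner
condition puts `v` and `w` at tree distance at most two, so they are parent and child, siblings,
or grandparent and grandchild; in the last two cases the two tree edges involved lie in a triangle
of `Γ` and therefore commute in `A(T*)`. The inverse homomorphism sends the generator of
`{v, parent v}` to `v * (parent v)⁻¹` and `1 ∈ ℤ` to `r`. This isomorphism carries `χ_Γ` to the
projection onto `ℤ`, whose kernel is `A(T*)`, so `BB(Γ) ≅ A(T*)`.
-/

def raagRels {V : Type} (G : SimpleGraph V) : Set (FreeGroup V) :=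
  {r | ∃ v w : V, G.Adj v w ∧
    r = FreeGroup.of v * FreeGroup.of w * (FreeGroup.of v)⁻¹ * (FreeGroup.of w)⁻¹}

/-- The right-angled Artin group of a simple graph. -/
abbrev RAAG {V : Type} (G : SimpleGraph V) : Type := PresentedGroup (raagRels G)

/-- The canonical generator of `RAAG G` corresponding to a vertex. -/
def raagGen {V : Type} (G : SimpleGraph V) (v : V) : RAAG G :=
  PresentedGroup.of (rels := raagRels G) v

/-- The homomorphism `A(Γ) → ℤ` sending every vertex generator to `1`. -/
def bbgChar {V : Type} (G : SimpleGraph V) : RAAG G →* Multiplicative ℤ :=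
  PresentedGroup.toGroup (f := fun _ : V => Multiplicative.ofAdd (1 : ℤ)) (by
    rintro r ⟨v, w, -, rfl⟩
    simp only [map_mul, map_inv, FreeGroup.lift_apply_of]
    group)

/-- The Bestvina–Brady group of a simple graph, as a subgroup of the RAAG. -/
def BBG {V : Type} (G : SimpleGraph V) : Subgroup (RAAG G) := (bbgChar G).ker

/-- `T` is a tree 2-spanner of `G`. -/
def IsTree2Spanner {V : Type} (G T : SimpleGraph V) : Prop :=
  T ≤ G ∧ T.IsTree ∧ ∀ x y : V, T.dist x y ≤ 2 * G.dist x y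

/-- The dual graph of a spanning tree `T` of `G`: vertices are the edges of `T`,
two of them being adjacent iff they are distinct and contained in a common triangle of `G`. -/
def dualGraph {V : Type} (G T : SimpleGraph V) : SimpleGraph ↥T.edgeSet :=
  SimpleGraph.fromRel (fun e f =>
    ∃ a b c : V, G.Adj a b ∧ G.Adj b c ∧ G.Adj a c ∧
      (e : Sym2 V) ∈ ({s(a, b), s(b, c), s(a, c)} : Set (Sym2 V)) ∧
      (f : Sym2 V) ∈ ({s(a, b), s(b, c), s(a, c)} : Set (Sym2 V)))

section RAAG

variable {W : Type} {H : SimpleGraph W} {M : Type*} [Group M]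

lemma raagGen_commute {u v : W} (h : H.Adj u v) : Commute (raagGen H u) (raagGen H v) :=
  commutatorElement_eq_one_iff_mul_comm.mp (PresentedGroup.one_of_mem ⟨u, v, h, rfl⟩)

def raagLift (f : W → M) (hf : ∀ u v, H.Adj u v → Commute (f u) (f v)) : RAAG H →* M :=
  PresentedGroup.toGroup (by
    rintro _ ⟨u, v, huv, rfl⟩
    simp only [map_mul, map_inv, FreeGroup.lift_apply_of]
    rw [(hf u v huv).eq]
    group)

@[simp]
lemma raagLift_raagGen (f : W → M) (hf : ∀ u v, H.Adj u v → Commute (f u) (f v)) (v : W) :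
    raagLift f hf (raagGen H v) = f v :=
  PresentedGroup.toGroup.of _

lemma RAAG.hom_ext {f g : RAAG H →* M} (h : ∀ v, f (raagGen H v) = g (raagGen H v)) : f = g :=
  PresentedGroup.ext h

@[simp]
lemma bbgChar_raagGen (v : W) : bbgChar H (raagGen H v) = Multiplicative.ofAdd 1 :=
  PresentedGroup.toGroup.of _

end RAAG

section Semidirect

variable {G N K : Type*} [Group G] [Group N] [Group K] {φ : K →* MulAut N}

noncomputable def SemidirectProduct.kerEquivOfMulEquiv (e : G ≃* N ⋊[φ] K) :
    (SemidirectProduct.rightHom.comp e.toMonoidHom).ker ≃* N :=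
  (Subgroup.equivMapOfInjective _ e.toMonoidHom e.injective).trans <|
    (MulEquiv.subgroupCongr (by
      rw [← MonoidHom.comap_ker, Subgroup.map_comap_eq_self_of_surjective e.surjective,
        ← SemidirectProduct.range_inl_eq_ker_rightHom])).trans
    (MonoidHom.ofInjective SemidirectProduct.inl_injective).symm

lemma MonoidHom.map_zpow_apply_eq_conj {f : N →* G} {a : MulAut N} {c : G}
    (h : ∀ x, f (a x) = c * f x * c⁻¹) (n : ℤ) (x : N) :
    f ((a ^ n) x) = c ^ n * f x * (c ^ n)⁻¹ := by
  induction n using Int.induction_on generalizing x with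
  | zero => simp
  | succ n ih => rw [zpow_add_one, MulAut.mul_apply, ih, h, zpow_add_one]; group
  | pred n ih =>
    have h' : f (a⁻¹ x) = c⁻¹ * f x * c := by
      have := h (a⁻¹ x)
      rw [MulAut.apply_inv_self] at this
      rw [this]
      group
    rw [zpow_sub_one, MulAut.mul_apply, ih, h', zpow_sub_one]; group

end Semidirect

namespace SimpleGraph

variable {V : Type*} {T : SimpleGraph V} {r u v w : V}

lemma Connected.adj_or_exists_adj_adj (hc : T.Connected) (hne : v ≠ w)
    (hd : T.dist v w ≤ 2) : T.Adj v w ∨ ∃ m, T.Adj v m ∧ T.Adj m w := by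
  obtain ⟨p, hp⟩ := hc.exists_walk_length_eq_dist v w
  match p, hp with
  | .nil, _ => exact absurd rfl hne
  | .cons h .nil, _ => exact .inl h
  | .cons h (.cons h' .nil), _ => exact .inr ⟨_, h, h'⟩
  | .cons _ (.cons _ (.cons _ _)), hp => simp only [Walk.length_cons] at hp; omega

open Classical in
/-- A neighbour of `v` one step closer to `r`; junk value `v` when there is none, as for `v = r`. -/
noncomputable def parent (T : SimpleGraph V) (r v : V) : V :=
  if h : ∃ u, T.Adj v u ∧ T.dist r u + 1 = T.dist r v then h.choose else v

lemma Connected.exists_adj_dist_add_one (hc : T.Connected) (h : v ≠ r) :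
    ∃ u, T.Adj v u ∧ T.dist r u + 1 = T.dist r v := by
  obtain ⟨w, hw⟩ := hc.exists_walk_length_eq_dist v r
  cases w with
  | nil => exact absurd rfl h
  | @cons _ u _ hadj q =>
    refine ⟨u, hadj, ?_⟩
    have h1 : T.dist u r ≤ q.length := dist_le q
    have h2 : T.dist v r ≤ T.dist v u + T.dist u r := hc.dist_triangle
    rw [dist_eq_one_iff_adj.mpr hadj] at h2
    rw [Walk.length_cons] at hw
    rw [dist_comm, @dist_comm _ _ r v]
    omega

lemma Connected.parent_adj (hc : T.Connected) (h : v ≠ r) : T.Adj v (T.parent r v) := by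
  rw [parent, dif_pos (hc.exists_adj_dist_add_one h)]
  exact (hc.exists_adj_dist_add_one h).choose_spec.1

lemma Connected.dist_parent_add_one (hc : T.Connected) (h : v ≠ r) :
    T.dist r (T.parent r v) + 1 = T.dist r v := by
  rw [parent, dif_pos (hc.exists_adj_dist_add_one h)]
  exact (hc.exists_adj_dist_add_one h).choose_spec.2

lemma Connected.parent_induction (hc : T.Connected) {P : V → Prop} (root : P r)
    (step : ∀ v, v ≠ r → P (T.parent r v) → P v) (v : V) : P v := by
  induction h : T.dist r v using Nat.strong_induction_on generalizing v with
  | _ n ih =>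
    by_cases hv : v = r
    · exact hv ▸ root
    · have := hc.dist_parent_add_one hv
      exact step v hv (ih _ (by omega) _ rfl)

/-- Both are the second vertex of the unique path from `v` to `r`. -/
lemma IsTree.parent_eq_of_adj (hT : T.IsTree) (hadj : T.Adj v u)
    (hd : T.dist r u + 1 = T.dist r v) : T.parent r v = u := by
  have geodesic : ∀ u, T.Adj v u → T.dist r u + 1 = T.dist r v →
      ∃ p : T.Walk v r, p.IsPath ∧ p.snd = u := by
    intro u hadj hd
    obtain ⟨q, hq⟩ := hT.connected.exists_walk_length_eq_dist u r
    refine ⟨q.cons hadj, Walk.isPath_of_length_eq_dist _ ?_, Walk.snd_cons _ _⟩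
    rw [Walk.length_cons, hq, dist_comm, hd, dist_comm]
  have hv : v ≠ r := by
    rintro rfl
    simp at hd
  obtain ⟨p, hp, hpv⟩ := geodesic _ (hT.connected.parent_adj hv)
    (hT.connected.dist_parent_add_one hv)
  obtain ⟨q, hq, hqu⟩ := geodesic u hadj hd
  rw [← hpv, ← hqu, (hT.existsUnique_path v r).unique hp hq]

lemma IsTree.adj_iff_parent (hT : T.IsTree) (r : V) {a b : V} :
    T.Adj a b ↔ (a ≠ r ∧ T.parent r a = b) ∨ (b ≠ r ∧ T.parent r b = a) := by
  refine ⟨fun hadj => ?_, ?_⟩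
  · rcases hT.dist_eq_dist_add_one_of_adj r hadj with hd | hd
    · refine .inl ⟨?_, hT.parent_eq_of_adj hadj hd.symm⟩
      rintro rfl
      simp at hd
    · refine .inr ⟨?_, hT.parent_eq_of_adj hadj.symm hd.symm⟩
      rintro rfl
      simp at hd
  · rintro (⟨ha, rfl⟩ | ⟨hb, rfl⟩)
    exacts [hT.connected.parent_adj ha, (hT.connected.parent_adj hb).symm]

variable (hT : T.IsTree) (r)

noncomputable def IsTree.parentEdgeEquiv : {v // v ≠ r} ≃ T.edgeSet :=
  Equiv.ofBijective (fun v => ⟨s(v.1, T.parent r v), hT.connected.parent_adj v.2⟩) <| by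
    refine ⟨fun ⟨v, hv⟩ ⟨w, hw⟩ h => ?_, fun ⟨e, he⟩ => ?_⟩
    · have h' : s(v, T.parent r v) = s(w, T.parent r w) := congrArg Subtype.val h
      rcases Sym2.eq_iff.mp h' with ⟨rfl, -⟩ | ⟨hvw, hwv⟩
      · rfl
      · have hdv := hT.connected.dist_parent_add_one hv
        have hdw := hT.connected.dist_parent_add_one hw
        rw [hwv] at hdv
        rw [← hvw] at hdw
        omega
    · induction e using Sym2.ind with | h a b =>
      rw [mem_edgeSet] at he
      rcases (hT.adj_iff_parent r).mp he with ⟨ha, rfl⟩ | ⟨hb, rfl⟩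
      · exact ⟨⟨a, ha⟩, rfl⟩
      · exact ⟨⟨b, hb⟩, Subtype.ext Sym2.eq_swap⟩

/-- The endpoint of `e` farther from `r`. -/
noncomputable def IsTree.tip (e : T.edgeSet) : V := ((hT.parentEdgeEquiv r).symm e).1

variable {hT r}

lemma IsTree.tip_ne (e : T.edgeSet) : hT.tip r e ≠ r := ((hT.parentEdgeEquiv r).symm e).2

lemma IsTree.tip_injective : Function.Injective (hT.tip r) :=
  Subtype.val_injective.comp (hT.parentEdgeEquiv r).symm.injective

@[simp]
lemma IsTree.tip_parentEdgeEquiv {v : V} (hv : v ≠ r) :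
    hT.tip r (hT.parentEdgeEquiv r ⟨v, hv⟩) = v := by
  simp [IsTree.tip]

@[simp]
lemma IsTree.parentEdgeEquiv_tip (e : T.edgeSet) :
    hT.parentEdgeEquiv r ⟨hT.tip r e, hT.tip_ne e⟩ = e :=
  (hT.parentEdgeEquiv r).apply_symm_apply e

lemma IsTree.coe_eq_tip (e : T.edgeSet) :
    (e : Sym2 V) = s(hT.tip r e, T.parent r (hT.tip r e)) :=
  congrArg Subtype.val (hT.parentEdgeEquiv_tip e).symm

lemma IsTree.tip_mem (e : T.edgeSet) : hT.tip r e ∈ (e : Sym2 V) := by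
  rw [hT.coe_eq_tip (r := r) e]
  exact Sym2.mem_mk_left _ _

lemma IsTree.parent_tip_mem (e : T.edgeSet) : T.parent r (hT.tip r e) ∈ (e : Sym2 V) := by
  rw [hT.coe_eq_tip (r := r) e]
  exact Sym2.mem_mk_right _ _

lemma IsTree.parent_tip_cases {e f : T.edgeSet} (hne : e ≠ f) {m : V} (he : m ∈ (e : Sym2 V))
    (hf : m ∈ (f : Sym2 V)) :
    T.parent r (hT.tip r e) = hT.tip r f ∨ T.parent r (hT.tip r f) = hT.tip r e ∨
      T.parent r (hT.tip r e) = T.parent r (hT.tip r f) := by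
  rw [hT.coe_eq_tip (r := r), Sym2.mem_iff] at he hf
  have : hT.tip r e ≠ hT.tip r f := hT.tip_injective.ne hne
  rcases he with rfl | rfl <;> rcases hf with h | h
  all_goals first | exact absurd h this | tauto

end SimpleGraph

section DualGraph

variable {V : Type} {G T : SimpleGraph V}

lemma mem_triangle_sides {a b c x : V} {e : Sym2 V}
    (he : e ∈ ({s(a, b), s(b, c), s(a, c)} : Set (Sym2 V))) (hx : x ∈ e) :
    x = a ∨ x = b ∨ x = c := by
  rcases he with rfl | rfl | rfl <;> simp only [Sym2.mem_iff] at hx <;> tauto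

lemma eq_or_adj_of_dualGraph_adj {e f : T.edgeSet} (h : (dualGraph G T).Adj e f) {x y : V}
    (hx : x ∈ (e : Sym2 V)) (hy : y ∈ (f : Sym2 V)) : x = y ∨ G.Adj x y := by
  obtain ⟨-, ⟨a, b, c, hab, hbc, hac, he, hf⟩ | ⟨a, b, c, hab, hbc, hac, hf, he⟩⟩ := h
  all_goals
    rcases mem_triangle_sides he hx with rfl | rfl | rfl <;>
      rcases mem_triangle_sides hf hy with rfl | rfl | rfl <;>
      simp only [true_or, *, G.adj_symm, or_true]

lemma exists_mem_of_dualGraph_adj {e f : T.edgeSet} (h : (dualGraph G T).Adj e f) :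
    ∃ m, m ∈ (e : Sym2 V) ∧ m ∈ (f : Sym2 V) := by
  obtain ⟨hne, ⟨a, b, c, -, -, -, he, hf⟩ | ⟨a, b, c, -, -, -, hf, he⟩⟩ := h
  all_goals
    have hne' : (e : Sym2 V) ≠ f := fun h => hne (Subtype.ext h)
    simp only [Set.mem_insert_iff, Set.mem_singleton_iff] at he hf
    rcases he with h1 | h1 | h1 <;> rcases hf with h2 | h2 | h2 <;>
      first | exact absurd (h1.trans h2.symm) hne' | simp [h1, h2]

lemma dualGraph_adj_of_triangle {e f : T.edgeSet} (hne : e ≠ f) {a b c : V} (hab : G.Adj a b)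
    (hbc : G.Adj b c) (hac : G.Adj a c) (he : (e : Sym2 V) = s(a, b))
    (hf : (f : Sym2 V) = s(b, c)) : (dualGraph G T).Adj e f :=
  ⟨hne, .inl ⟨a, b, c, hab, hbc, hac, by simp [he], by simp [hf]⟩⟩

end DualGraph

namespace BestvinaBrady

open SimpleGraph SemidirectProduct Multiplicative

variable {V : Type} (G : SimpleGraph V) {T : SimpleGraph V} (hT : T.IsTree) (r : V)

open Classical in
noncomputable def pathWord (k : ℤ) (v : V) : RAAG (dualGraph G T) :=
  if h : v = r then 1
  else pathWord k (T.parent r v) * raagGen _ (hT.parentEdgeEquiv r ⟨v, h⟩) ^ k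
termination_by T.dist r v
decreasing_by have := hT.connected.dist_parent_add_one h; omega

lemma pathWord_root (k : ℤ) : pathWord G hT r k r = 1 := by
  rw [pathWord, dif_pos rfl]

lemma pathWord_of_ne (k : ℤ) {v : V} (hv : v ≠ r) :
    pathWord G hT r k v =
      pathWord G hT r k (T.parent r v) * raagGen _ (hT.parentEdgeEquiv r ⟨v, hv⟩) ^ k := by
  rw [pathWord, dif_neg hv]

lemma pathWord_tip (k : ℤ) (e : T.edgeSet) :
    pathWord G hT r k (hT.tip r e) =
      pathWord G hT r k (T.parent r (hT.tip r e)) * raagGen _ e ^ k := by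
  rw [pathWord_of_ne G hT r k (hT.tip_ne e), hT.parentEdgeEquiv_tip]

/-- The path words at the parents of `tip e` and `tip f` differ by a power of the generator `f`,
which commutes with `e`. -/
lemma conj_pathWord_parent_tip_eq {e f : T.edgeSet} (hef : (dualGraph G T).Adj e f)
    (h : T.parent r (hT.tip r e) = hT.tip r f) (k : ℤ) :
    MulAut.conj (pathWord G hT r k (T.parent r (hT.tip r e))) (raagGen _ e) =
      MulAut.conj (pathWord G hT r k (T.parent r (hT.tip r f))) (raagGen _ e) := by
  rw [h, pathWord_tip, map_mul, MulAut.mul_apply, MulAut.conj_apply (raagGen _ f ^ k),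
    ((raagGen_commute hef).symm.zpow_left k).mul_inv_cancel]

lemma commute_conj_pathWord_parent_tip {e f : T.edgeSet} (hef : (dualGraph G T).Adj e f)
    (k : ℤ) :
    Commute (MulAut.conj (pathWord G hT r k (T.parent r (hT.tip r e))) (raagGen _ e))
      (MulAut.conj (pathWord G hT r k (T.parent r (hT.tip r f))) (raagGen _ f)) := by
  have hcomm := raagGen_commute hef
  obtain ⟨m, hme, hmf⟩ := exists_mem_of_dualGraph_adj hef
  rcases hT.parent_tip_cases (r := r) hef.ne hme hmf with h | h | h
  · rw [conj_pathWord_parent_tip_eq G hT r hef h]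
    exact hcomm.map _
  · rw [conj_pathWord_parent_tip_eq G hT r hef.symm h]
    exact hcomm.map _
  · rw [h]
    exact hcomm.map _

noncomputable def twist (k : ℤ) : RAAG (dualGraph G T) →* RAAG (dualGraph G T) :=
  raagLift (fun e => MulAut.conj (pathWord G hT r k (T.parent r (hT.tip r e))) (raagGen _ e))
    fun _ _ hef => commute_conj_pathWord_parent_tip G hT r hef k

lemma twist_raagGen (k : ℤ) (e : T.edgeSet) :
    twist G hT r k (raagGen _ e) =
      MulAut.conj (pathWord G hT r k (T.parent r (hT.tip r e))) (raagGen _ e) :=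
  raagLift_raagGen _ _ _

lemma twist_pathWord_neg (k : ℤ) (v : V) :
    twist G hT r k (pathWord G hT r (-k) v) = (pathWord G hT r k v)⁻¹ := by
  induction v using hT.connected.parent_induction (r := r) with
  | root => simp [pathWord_root]
  | step v hv ih =>
    rw [pathWord_of_ne G hT r _ hv, map_mul, ih, map_zpow, twist_raagGen,
      hT.tip_parentEdgeEquiv, MulAut.conj_apply, conj_zpow, pathWord_of_ne G hT r _ hv]
    group

lemma twist_comp_twist_neg (k : ℤ) :
    (twist G hT r k).comp (twist G hT r (-k)) = MonoidHom.id _ :=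
  RAAG.hom_ext fun e => by
    rw [MonoidHom.comp_apply, twist_raagGen, MulAut.conj_apply, map_mul, map_mul, map_inv,
      twist_pathWord_neg, twist_raagGen, MulAut.conj_apply, MonoidHom.id_apply]
    group

noncomputable def twistAut : MulAut (RAAG (dualGraph G T)) :=
  MonoidHom.toMulEquiv (twist G hT r (-1)) (twist G hT r 1) (twist_comp_twist_neg G hT r 1) <| by
    simpa using twist_comp_twist_neg G hT r (-1)

noncomputable def twistAction : Multiplicative ℤ →* MulAut (RAAG (dualGraph G T)) :=
  zpowersHom _ (twistAut G hT r)

lemma twistAction_ofAdd_one (x : RAAG (dualGraph G T)) :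
    twistAction G hT r (ofAdd 1) x = twist G hT r (-1) x := by
  rw [twistAction, zpowersHom_apply, toAdd_ofAdd, zpow_one]
  rfl

noncomputable def vertexImage (v : V) :
    RAAG (dualGraph G T) ⋊[twistAction G hT r] Multiplicative ℤ :=
  inl (pathWord G hT r (-1) v)⁻¹ * inr (ofAdd 1)

lemma vertexImage_root : vertexImage G hT r r = inr (ofAdd 1) := by
  simp [vertexImage, pathWord_root]

lemma vertexImage_of_ne {v : V} (hv : v ≠ r) :
    vertexImage G hT r v =
      inl (raagGen _ (hT.parentEdgeEquiv r ⟨v, hv⟩)) * vertexImage G hT r (T.parent r v) := by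
  rw [vertexImage, vertexImage, pathWord_of_ne G hT r _ hv, mul_inv_rev, zpow_neg_one, inv_inv,
    map_mul, mul_assoc]

lemma commute_inl_vertexImage_parent {v : V} (hv : v ≠ r) :
    Commute (inl (raagGen _ (hT.parentEdgeEquiv r ⟨v, hv⟩)))
      (vertexImage G hT r (T.parent r v)) := by
  set x := raagGen (dualGraph G T) (hT.parentEdgeEquiv r ⟨v, hv⟩)
  set W := pathWord G hT r (-1) (T.parent r v)
  have hshift : (inr (ofAdd 1) : RAAG (dualGraph G T) ⋊[twistAction G hT r] Multiplicative ℤ) *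
      inl x = inl (W * x * W⁻¹) * inr (ofAdd 1) := by
    have h := inl_aut (φ := twistAction G hT r) (ofAdd 1) x
    rw [twistAction_ofAdd_one, twist_raagGen, hT.tip_parentEdgeEquiv, MulAut.conj_apply] at h
    rw [h, map_inv, inv_mul_cancel_right]
  show inl x * (inl W⁻¹ * inr _) = inl W⁻¹ * inr _ * inl x
  rw [mul_assoc (inl W⁻¹), hshift, ← mul_assoc, ← mul_assoc, ← map_mul, ← map_mul]
  congr 2
  group

lemma commute_vertexImage_parent {v : V} (hv : v ≠ r) :
    Commute (vertexImage G hT r v) (vertexImage G hT r (T.parent r v)) := by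
  rw [vertexImage_of_ne G hT r hv]
  exact (commute_inl_vertexImage_parent G hT r hv).mul_left (Commute.refl _)

lemma commute_vertexImage_of_parent_eq {v w : V} (hv : v ≠ r) (hw : w ≠ r)
    (hp : T.parent r v = T.parent r w)
    (h : Commute (raagGen (dualGraph G T) (hT.parentEdgeEquiv r ⟨v, hv⟩))
      (raagGen _ (hT.parentEdgeEquiv r ⟨w, hw⟩))) :
    Commute (vertexImage G hT r v) (vertexImage G hT r w) := by
  have hv' := commute_inl_vertexImage_parent G hT r hv
  have hw' := commute_inl_vertexImage_parent G hT r hw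
  rw [hp] at hv'
  rw [vertexImage_of_ne G hT r hv, vertexImage_of_ne G hT r hw, hp]
  exact ((h.map inl).mul_right hv').mul_left (hw'.symm.mul_right (Commute.refl _))

lemma commute_vertexImage_grandparent {v : V} (hv : v ≠ r) (hpv : T.parent r v ≠ r)
    (h : Commute (raagGen (dualGraph G T) (hT.parentEdgeEquiv r ⟨v, hv⟩))
      (raagGen _ (hT.parentEdgeEquiv r ⟨T.parent r v, hpv⟩))) :
    Commute (vertexImage G hT r v) (vertexImage G hT r (T.parent r (T.parent r v))) := by
  have h1 := commute_inl_vertexImage_parent G hT r hv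
  have h2 := commute_inl_vertexImage_parent G hT r hpv
  rw [vertexImage_of_ne G hT r hpv] at h1
  have h3 := (h.map inl).inv_right.mul_right h1
  rw [inv_mul_cancel_left] at h3
  rw [vertexImage_of_ne G hT r hv, vertexImage_of_ne G hT r hpv]
  exact h3.mul_left (h2.mul_left (Commute.refl _))

lemma commute_raagGen_parentEdge_of_triangle {a b x y z : V} (ha : a ≠ r) (hb : b ≠ r)
    (hab : a ≠ b) (hxy : G.Adj x y) (hyz : G.Adj y z) (hxz : G.Adj x z)
    (hax : s(a, T.parent r a) = s(x, y)) (hby : s(b, T.parent r b) = s(y, z)) :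
    Commute (raagGen (dualGraph G T) (hT.parentEdgeEquiv r ⟨a, ha⟩))
      (raagGen _ (hT.parentEdgeEquiv r ⟨b, hb⟩)) :=
  raagGen_commute <| dualGraph_adj_of_triangle
    ((hT.parentEdgeEquiv r).injective.ne (by simpa using hab)) hxy hyz hxz hax hby

lemma commute_vertexImage_of_adj (hle : T ≤ G)
    (hsp : ∀ ⦃v w⦄, G.Adj v w → T.dist v w ≤ 2) {v w : V} (hvw : G.Adj v w) :
    Commute (vertexImage G hT r v) (vertexImage G hT r w) := by
  have hG : ∀ {u}, u ≠ r → G.Adj u (T.parent r u) := fun hu =>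
    hle (hT.connected.parent_adj hu)
  rcases hT.connected.adj_or_exists_adj_adj hvw.ne (hsp hvw) with hadj | ⟨m, hvm, hmw⟩
  · rcases (hT.adj_iff_parent r).mp hadj with ⟨hv, rfl⟩ | ⟨hw, rfl⟩
    · exact commute_vertexImage_parent G hT r hv
    · exact (commute_vertexImage_parent G hT r hw).symm
  rcases (hT.adj_iff_parent r).mp hvm with ⟨hv, rfl⟩ | ⟨hm, rfl⟩ <;>
    rcases (hT.adj_iff_parent r).mp hmw with ⟨hm', rfl⟩ | ⟨hw, hwm⟩
  · exact commute_vertexImage_grandparent G hT r hv hm' <|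
      commute_raagGen_parentEdge_of_triangle G hT r hv hm' (hG hv).ne (hG hv) (hG hm') hvw rfl rfl
  · refine commute_vertexImage_of_parent_eq G hT r hv hw hwm.symm <|
      commute_raagGen_parentEdge_of_triangle G hT r hv hw hvw.ne (hG hv) ?_ hvw rfl ?_
    · exact hwm ▸ (hG hw).symm
    · rw [hwm, Sym2.eq_swap]
  · exact absurd rfl hvw.ne
  · subst hwm
    exact (commute_vertexImage_grandparent G hT r hw hm <|
      commute_raagGen_parentEdge_of_triangle G hT r hw hm (hG hw).ne (hG hw) (hG hm) hvw.symm
        rfl rfl).symm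

noncomputable def toSemidirect (hle : T ≤ G)
    (hsp : ∀ ⦃v w⦄, G.Adj v w → T.dist v w ≤ 2) :
    RAAG G →* RAAG (dualGraph G T) ⋊[twistAction G hT r] Multiplicative ℤ :=
  raagLift (vertexImage G hT r) fun _ _ => commute_vertexImage_of_adj G hT r hle hsp

noncomputable def edgeHom : RAAG (dualGraph G T) →* RAAG G :=
  raagLift (fun e => raagGen G (hT.tip r e) * (raagGen G (T.parent r (hT.tip r e)))⁻¹) <| by
    intro e f hef
    have h : ∀ {x y}, x ∈ (e : Sym2 V) → y ∈ (f : Sym2 V) →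
        Commute (raagGen G x) (raagGen G y) := by
      intro x y hx hy
      rcases eq_or_adj_of_dualGraph_adj hef hx hy with rfl | hxy
      exacts [Commute.refl _, raagGen_commute hxy]
    have he := hT.tip_mem (r := r) e
    have he' := hT.parent_tip_mem (r := r) e
    have hf := hT.tip_mem (r := r) f
    have hf' := hT.parent_tip_mem (r := r) f
    exact ((h he hf).mul_right (h he hf').inv_right).mul_left
      ((h he' hf).mul_right (h he' hf').inv_right).inv_left

lemma edgeHom_raagGen (e : T.edgeSet) :
    edgeHom G hT r (raagGen _ e) =
      raagGen G (hT.tip r e) * (raagGen G (T.parent r (hT.tip r e)))⁻¹ :=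
  raagLift_raagGen _ _ _

lemma edgeHom_pathWord (v : V) :
    edgeHom G hT r (pathWord G hT r (-1) v) = raagGen G r * (raagGen G v)⁻¹ := by
  induction v using hT.connected.parent_induction (r := r) with
  | root => simp [pathWord_root]
  | step v hv ih =>
    rw [pathWord_of_ne G hT r _ hv, map_mul, ih, map_zpow, edgeHom_raagGen,
      hT.tip_parentEdgeEquiv]
    group

lemma edgeHom_twist (hle : T ≤ G) (x : RAAG (dualGraph G T)) :
    edgeHom G hT r (twist G hT r (-1) x) = raagGen G r * edgeHom G hT r x * (raagGen G r)⁻¹ := by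
  suffices (edgeHom G hT r).comp (twist G hT r (-1)) =
      (MulAut.conj (raagGen G r)).toMonoidHom.comp (edgeHom G hT r) from
    DFunLike.congr_fun this x
  refine RAAG.hom_ext fun e => ?_
  have hc : Commute (raagGen G (hT.tip r e)) (raagGen G (T.parent r (hT.tip r e))) :=
    raagGen_commute (hle (hT.connected.parent_adj (hT.tip_ne e)))
  simp only [MonoidHom.comp_apply, twist_raagGen, MulAut.conj_apply, map_mul, map_inv,
    edgeHom_pathWord, edgeHom_raagGen, MulEquiv.coe_toMonoidHom]
  calc _ = raagGen G r * ((raagGen G (T.parent r (hT.tip r e)))⁻¹ * raagGen G (hT.tip r e)) *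
        (raagGen G r)⁻¹ := by group
    _ = _ := by rw [← hc.inv_right.eq]; group

noncomputable def ofSemidirect (hle : T ≤ G) :
    RAAG (dualGraph G T) ⋊[twistAction G hT r] Multiplicative ℤ →* RAAG G :=
  lift (edgeHom G hT r) (zpowersHom _ (raagGen G r)) fun n => MonoidHom.ext fun x => by
    simp only [MonoidHom.comp_apply, MulEquiv.coe_toMonoidHom, MulAut.conj_apply, twistAction,
      zpowersHom_apply]
    exact MonoidHom.map_zpow_apply_eq_conj (edgeHom_twist G hT r hle) _ x

lemma ofSemidirect_vertexImage (hle : T ≤ G) (v : V) :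
    ofSemidirect G hT r hle (vertexImage G hT r v) = raagGen G v := by
  simp [ofSemidirect, vertexImage, edgeHom_pathWord]

lemma toSemidirect_edgeHom (hle : T ≤ G) (hsp : ∀ ⦃v w⦄, G.Adj v w → T.dist v w ≤ 2)
    (x : RAAG (dualGraph G T)) : toSemidirect G hT r hle hsp (edgeHom G hT r x) = inl x := by
  suffices (toSemidirect G hT r hle hsp).comp (edgeHom G hT r) = inl from
    DFunLike.congr_fun this x
  refine RAAG.hom_ext fun e => ?_
  rw [MonoidHom.comp_apply, edgeHom_raagGen, map_mul, map_inv, toSemidirect, raagLift_raagGen,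
    raagLift_raagGen, vertexImage_of_ne G hT r (hT.tip_ne e), hT.parentEdgeEquiv_tip,
    mul_inv_cancel_right]

noncomputable def raagEquivSemidirect (hle : T ≤ G)
    (hsp : ∀ ⦃v w⦄, G.Adj v w → T.dist v w ≤ 2) :
    RAAG G ≃* RAAG (dualGraph G T) ⋊[twistAction G hT r] Multiplicative ℤ :=
  MonoidHom.toMulEquiv (toSemidirect G hT r hle hsp) (ofSemidirect G hT r hle)
    (RAAG.hom_ext fun v => by
      simp [toSemidirect, ofSemidirect_vertexImage])
    (hom_ext (MonoidHom.ext fun x => by simp [ofSemidirect, toSemidirect_edgeHom])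
      (MonoidHom.ext_mint (by simp [ofSemidirect, toSemidirect, vertexImage_root])))

lemma rightHom_comp_raagEquivSemidirect (hle : T ≤ G)
    (hsp : ∀ ⦃v w⦄, G.Adj v w → T.dist v w ≤ 2) :
    rightHom.comp (raagEquivSemidirect G hT r hle hsp).toMonoidHom = bbgChar G :=
  RAAG.hom_ext fun v => by
    simp [raagEquivSemidirect, toSemidirect, vertexImage]

end BestvinaBrady

theorem stmt_0_general {V : Type} (G T : SimpleGraph V) (hT : IsTree2Spanner G T) :
    Nonempty (↥(BBG G) ≃* RAAG (dualGraph G T)) := by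
  obtain ⟨hle, htree, hsp⟩ := hT
  obtain ⟨r⟩ := htree.connected.nonempty
  have hsp' : ∀ ⦃v w⦄, G.Adj v w → T.dist v w ≤ 2 := fun v w hvw => by
    simpa [SimpleGraph.dist_eq_one_iff_adj.mpr hvw] using hsp v w
  have hker : BBG G = (SemidirectProduct.rightHom.comp
      (BestvinaBrady.raagEquivSemidirect G htree r hle hsp').toMonoidHom).ker := by
    rw [BBG, BestvinaBrady.rightHom_comp_raagEquivSemidirect]
  exact ⟨(MulEquiv.subgroupCongr hker).trans (SemidirectProduct.kerEquivOfMulEquiv _)⟩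

/-- If a finite simple graph admits a tree 2-spanner `T`, then its Bestvina–Brady group is
isomorphic to the RAAG on the dual graph of `T`; in particular it is a RAAG. -/
theorem stmt_0 {V : Type} [Fintype V] (G T : SimpleGraph V) (hT : IsTree2Spanner G T) :
    Nonempty (↥(BBG G) ≃* RAAG (dualGraph G T)) :=
  stmt_0_general G T hT
end

section
/- If T₁ and T₂ are both tree 2-spanners of the same finite simple graph Γ, then the dual graphs T₁* and T₂* are isomorphic as graphs. -/
open SimpleGraph

namespace TwoSpannerAux
variable {V : Type} {G T T₁ T₂ : SimpleGraph V}

/-- In a tree, any path realizes the distance. -/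
lemma path_length_eq_dist (hT : T.IsTree) {a b : V} (p : T.Walk a b) (hp : p.IsPath) :
    p.length = T.dist a b := by
  classical
  obtain ⟨w, hw⟩ := hT.isConnected.exists_walk_length_eq_dist a b
  have h1 : w.bypass.length ≤ T.dist a b := hw ▸ w.length_bypass_le
  have h2 : T.dist a b ≤ p.length := SimpleGraph.dist_le p
  have h3 : p = w.bypass :=
    congrArg Subtype.val (hT.IsAcyclic.path_unique ⟨p, hp⟩ ⟨w.bypass, w.bypass_isPath⟩)
  rw [h3] at h2 ⊢; omega

lemma acyclic_no_tri (hT : T.IsAcyclic) {a b c : V} (h1 : T.Adj a b) (h2 : T.Adj b c)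
    (h3 : T.Adj a c) : False := by
  have hp : (SimpleGraph.Walk.cons h3 SimpleGraph.Walk.nil : T.Walk a c).IsPath := by
    simp [h3.ne]
  have hq : (SimpleGraph.Walk.cons h1 (SimpleGraph.Walk.cons h2 SimpleGraph.Walk.nil) :
      T.Walk a c).IsPath := by
    simp [SimpleGraph.Walk.isPath_def, h1.ne, h2.ne, h3.ne]
  have heq := hT.path_unique ⟨_, hp⟩ ⟨_, hq⟩
  have := congrArg (fun q : T.Path a c => q.1.length) heq
  simp at this

lemma acyclic_diamond (hT : T.IsAcyclic) {a b c d : V} (h1 : T.Adj a b) (h2 : T.Adj b c)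
    (h3 : T.Adj a d) (h4 : T.Adj d c) (hbd : b ≠ d) (hac : a ≠ c) : False := by
  have hp : (SimpleGraph.Walk.cons h1 (SimpleGraph.Walk.cons h2 SimpleGraph.Walk.nil) :
      T.Walk a c).IsPath := by
    simp [SimpleGraph.Walk.isPath_def, h1.ne, h2.ne, hac]
  have hq : (SimpleGraph.Walk.cons h3 (SimpleGraph.Walk.cons h4 SimpleGraph.Walk.nil) :
      T.Walk a c).IsPath := by
    simp [SimpleGraph.Walk.isPath_def, h3.ne, h4.ne, hac]
  have heq := hT.path_unique ⟨_, hp⟩ ⟨_, hq⟩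
  have := congrArg (fun q : T.Path a c => q.1.support) heq
  simp at this
  exact hbd this

lemma dist_le_two (h : IsTree2Spanner G T) {x y : V} (hG : G.Adj x y) : T.dist x y ≤ 2 := by
  have h1 : G.dist x y = 1 := SimpleGraph.dist_eq_one_iff_adj.2 hG
  have := h.2.2 x y
  omega

lemma no_path3 (h : IsTree2Spanner G T) {a b c d : V} (h1 : T.Adj a b) (h2 : T.Adj b c)
    (h3 : T.Adj c d) (hG : G.Adj a d) (hac : a ≠ c) (hbd : b ≠ d) (had : a ≠ d) : False := by
  have hp : (SimpleGraph.Walk.cons h1 (SimpleGraph.Walk.cons h2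
      (SimpleGraph.Walk.cons h3 SimpleGraph.Walk.nil)) : T.Walk a d).IsPath := by
    simp [SimpleGraph.Walk.isPath_def, h1.ne, h2.ne, h3.ne, hac, hbd, had]
  have := path_length_eq_dist h.2.1 _ hp
  have h2 := dist_le_two h hG
  simp at this
  omega

lemma no_path4 (h : IsTree2Spanner G T) {a b c d e : V} (h1 : T.Adj a b) (h2 : T.Adj b c)
    (h3 : T.Adj c d) (h4 : T.Adj d e) (hG : G.Adj a e) (hac : a ≠ c) (had : a ≠ d)
    (hae : a ≠ e) (hbd : b ≠ d) (hbe : b ≠ e) (hce : c ≠ e) : False := by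
  have hp : (SimpleGraph.Walk.cons h1 (SimpleGraph.Walk.cons h2 (SimpleGraph.Walk.cons h3
      (SimpleGraph.Walk.cons h4 SimpleGraph.Walk.nil))) : T.Walk a e).IsPath := by
    simp [SimpleGraph.Walk.isPath_def, h1.ne, h2.ne, h3.ne, h4.ne, hac, had, hae, hbd, hbe, hce]
  have := path_length_eq_dist h.2.1 _ hp
  have h2 := dist_le_two h hG
  simp at this
  omega

lemma midpoint_exists (h : IsTree2Spanner G T) {x y : V} (hG : G.Adj x y) (hn : ¬ T.Adj x y) :
    ∃ m, T.Adj x m ∧ T.Adj m y := by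
  have hd2 : T.dist x y ≤ 2 := dist_le_two h hG
  have hd0 : 0 < T.dist x y := h.2.1.isConnected.pos_dist_of_ne hG.ne
  have hd1 : T.dist x y ≠ 1 := fun hh => hn (SimpleGraph.dist_eq_one_iff_adj.1 hh)
  have hd : T.dist x y = 2 := by omega
  obtain ⟨w, hw⟩ := (h.2.1.isConnected x y).exists_walk_length_eq_dist
  rw [hd] at hw
  match w, hw with
  | SimpleGraph.Walk.cons (v := m) ha (SimpleGraph.Walk.cons hb SimpleGraph.Walk.nil), _ =>
    exact ⟨m, ha, hb⟩

lemma mid_unique (hT : T.IsAcyclic) {x y m m' : V} (h1 : T.Adj x m) (h2 : T.Adj m y)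
    (h3 : T.Adj x m') (h4 : T.Adj m' y) (hxy : x ≠ y) : m = m' := by
  by_contra hne
  exact acyclic_diamond hT h1 h2 h3 h4 hne hxy

lemma oneSide (h1 : IsTree2Spanner G T₁) {x y m : V} (hxy : T₁.Adj x y) (hxm : G.Adj x m)
    (hmy : G.Adj m y) : (T₁.Adj x m ∧ ¬T₁.Adj m y) ∨ (¬T₁.Adj x m ∧ T₁.Adj m y) := by
  by_cases ha : T₁.Adj x m
  · refine Or.inl ⟨ha, fun hb => ?_⟩
    exact acyclic_no_tri h1.2.1.IsAcyclic ha hb hxy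
  · by_cases hb : T₁.Adj m y
    · exact Or.inr ⟨ha, hb⟩
    · exfalso
      obtain ⟨p, hp1, hp2⟩ := midpoint_exists h1 hxm ha
      obtain ⟨q, hq1, hq2⟩ := midpoint_exists h1 hmy hb
      -- paths x-p-m (length 2) and x-y-q-m (length 3)
      have hpath : (SimpleGraph.Walk.cons hp1 (SimpleGraph.Walk.cons hp2 SimpleGraph.Walk.nil) :
          T₁.Walk x m).IsPath := by
        simp [SimpleGraph.Walk.isPath_def, hp1.ne, hp2.ne, hxm.ne]
      have hxq : x ≠ q := fun hh => ha (hh ▸ hq1.symm)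
      have hqpath : (SimpleGraph.Walk.cons hxy (SimpleGraph.Walk.cons hq2.symm
          (SimpleGraph.Walk.cons hq1.symm SimpleGraph.Walk.nil)) : T₁.Walk x m).IsPath := by
        simp [SimpleGraph.Walk.isPath_def, hxy.ne, hq1.ne, hq2.ne, hxm.ne, hxq,
          hmy.ne.symm, Ne.symm hxq, hq2.ne.symm, hq1.ne.symm]
      have e1 := path_length_eq_dist h1.2.1 _ hpath
      have e2 := path_length_eq_dist h1.2.1 _ hqpath
      simp at e1 e2
      omega

/-- Specification of the image of a `T₁`-edge `e ∉ T₂` under the canonical bijection. -/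
def Spec (G T₁ T₂ : SimpleGraph V) (e f : Sym2 V) : Prop :=
  f ∈ T₂.edgeSet ∧ f ∉ T₁.edgeSet ∧ ∃ x m y : V,
    e = s(x, y) ∧ T₂.Adj x m ∧ T₂.Adj m y ∧ T₁.Adj x m ∧ f = s(m, y)

lemma spec_exists (h1 : IsTree2Spanner G T₁) (h2 : IsTree2Spanner G T₂) {e : Sym2 V}
    (he : e ∈ T₁.edgeSet) (he2 : e ∉ T₂.edgeSet) : ∃ f, Spec G T₁ T₂ e f := by
  induction e using Sym2.ind with
  | _ x y =>
    rw [SimpleGraph.mem_edgeSet] at he he2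
    obtain ⟨m, hm1, hm2⟩ := midpoint_exists h2 (h1.1 he) he2
    rcases oneSide h1 he (h2.1 hm1) (h2.1 hm2) with ⟨ha, hb⟩ | ⟨ha, hb⟩
    · exact ⟨s(m, y), T₂.mem_edgeSet.2 hm2, fun hh => hb (T₁.mem_edgeSet.1 hh),
        x, m, y, rfl, hm1, hm2, ha, rfl⟩
    · refine ⟨s(m, x), T₂.mem_edgeSet.2 hm1.symm,
        fun hh => ha ((T₁.mem_edgeSet.1 hh).symm), y, m, x, Sym2.eq_swap, hm2.symm,
        hm1.symm, hb.symm, rfl⟩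

open Classical in
noncomputable def phi (G T₁ T₂ : SimpleGraph V) (e : Sym2 V) : Sym2 V :=
  if e ∈ T₂.edgeSet then e
  else if h : ∃ f, Spec G T₁ T₂ e f then h.choose else e

lemma phi_eq_of_mem {e : Sym2 V} (he2 : e ∈ T₂.edgeSet) : phi G T₁ T₂ e = e := by
  simp [phi, he2]

lemma phi_spec (h1 : IsTree2Spanner G T₁) (h2 : IsTree2Spanner G T₂) {e : Sym2 V}
    (he : e ∈ T₁.edgeSet) (he2 : e ∉ T₂.edgeSet) : Spec G T₁ T₂ e (phi G T₁ T₂ e) := by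
  have h := spec_exists h1 h2 he he2
  simp only [phi, if_neg he2, dif_pos h]
  exact h.choose_spec

lemma phi_mem (h1 : IsTree2Spanner G T₁) (h2 : IsTree2Spanner G T₂) {e : Sym2 V}
    (he : e ∈ T₁.edgeSet) : phi G T₁ T₂ e ∈ T₂.edgeSet := by
  by_cases he2 : e ∈ T₂.edgeSet
  · rw [phi_eq_of_mem he2]; exact he2
  · exact (phi_spec h1 h2 he he2).1

lemma spec_unique (h1 : IsTree2Spanner G T₁) (h2 : IsTree2Spanner G T₂) {e f f' : Sym2 V}
    (he : e ∈ T₁.edgeSet) (hs : Spec G T₁ T₂ e f) (hs' : Spec G T₁ T₂ e f') : f = f' := by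
  obtain ⟨hf2, hf1, x, m, y, rfl, hxm, hmy, hxm1, rfl⟩ := hs
  obtain ⟨hf2', hf1', x', m', y', hee, hxm', hmy', hxm1', rfl⟩ := hs'
  have hxy : T₁.Adj x y := T₁.mem_edgeSet.1 he
  rcases Sym2.eq_iff.1 hee with ⟨hx, hy⟩ | ⟨hx, hy⟩
  · subst hx; subst hy
    have := mid_unique h2.2.1.IsAcyclic hxm hmy hxm' hmy' hxy.ne
    rw [this]
  · subst hx; subst hy
    -- x' = y, y' = x : both sides of e would be in T₁
    exfalso
    have hm : m = m' := mid_unique h2.2.1.IsAcyclic hxm hmy hmy'.symm hxm'.symm hxy.ne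
    subst hm
    exact acyclic_no_tri h1.2.1.IsAcyclic hxm1 hxm1'.symm hxy

lemma phi_inv (h1 : IsTree2Spanner G T₁) (h2 : IsTree2Spanner G T₂) {e : Sym2 V}
    (he : e ∈ T₁.edgeSet) : phi G T₂ T₁ (phi G T₁ T₂ e) = e := by
  by_cases he2 : e ∈ T₂.edgeSet
  · rw [phi_eq_of_mem he2, phi_eq_of_mem he]
  · obtain ⟨hφ2, hφ1, x, m, y, hexy, hxm, hmy, hxm1, hφ⟩ := phi_spec h1 h2 he he2
    have hspec' : Spec G T₂ T₁ (phi G T₁ T₂ e) e :=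
      ⟨he, he2, m, x, y, hφ, hxm1.symm, T₁.mem_edgeSet.1 (hexy ▸ he), hxm.symm, hexy⟩
    exact spec_unique h2 h1 hφ2 (phi_spec h2 h1 hφ2 hφ1) hspec'

lemma spec_orient {x y : V} {f : Sym2 V} (hs : Spec G T₁ T₂ s(x, y) f) :
    f ∉ T₁.edgeSet ∧ ∃ m, T₂.Adj x m ∧ T₂.Adj m y ∧
      ((T₁.Adj x m ∧ f = s(m, y)) ∨ (T₁.Adj y m ∧ f = s(m, x))) := by
  obtain ⟨hf2, hf1, x', m, y', hee, hxm, hmy, hxm1, rfl⟩ := hs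
  refine ⟨hf1, m, ?_⟩
  rcases Sym2.eq_iff.1 hee.symm with ⟨hx, hy⟩ | ⟨hx, hy⟩
  · subst hx; subst hy; exact ⟨hxm, hmy, Or.inl ⟨hxm1, rfl⟩⟩
  · subst hx; subst hy; exact ⟨hmy.symm, hxm.symm, Or.inr ⟨hxm1, rfl⟩⟩

/-- Mixed case of the main adjacency-preservation lemma: `s(x,y) ∈ T₂`, `s(y,z) ∉ T₂`. -/
lemma phi_adj_mixed (h1 : IsTree2Spanner G T₁) (h2 : IsTree2Spanner G T₂) {x y z : V}
    (hxy : G.Adj x y) (hyz : G.Adj y z) (hxz : G.Adj x z) (he : s(x, y) ∈ T₁.edgeSet)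
    (hf : s(y, z) ∈ T₁.edgeSet) (he2 : s(x, y) ∈ T₂.edgeSet) (hf2 : s(y, z) ∉ T₂.edgeSet) :
    ∃ a b c : V, G.Adj a b ∧ G.Adj b c ∧ G.Adj a c ∧
      phi G T₁ T₂ s(x, y) ∈ ({s(a, b), s(b, c), s(a, c)} : Set (Sym2 V)) ∧
      phi G T₁ T₂ s(y, z) ∈ ({s(a, b), s(b, c), s(a, c)} : Set (Sym2 V)) := by
  obtain ⟨hφ1, n, hyn, hnz, hor⟩ := spec_orient (phi_spec h1 h2 hf hf2)
  have hphie : phi G T₁ T₂ s(x, y) = s(x, y) := phi_eq_of_mem he2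
  by_cases hnx : n = x
  · rcases hor with ⟨_, hφ⟩ | ⟨_, hφ⟩
    · -- φf = s(n,z) = s(x,z) : triangle x,y,z
      rw [hnx] at hφ
      exact ⟨x, y, z, hxy, hyz, hxz, by simp [hphie], by simp [hφ]⟩
    · -- φf = s(n,y) = s(x,y) ∈ T₁ : contradiction
      rw [hnx] at hφ
      exact ((hφ1 (hφ.symm ▸ he))).elim
  · exact (no_path3 h2 (T₂.mem_edgeSet.1 he2) hyn hnz hxz (Ne.symm hnx) hyz.ne hxz.ne).elim

lemma phi_adj (h1 : IsTree2Spanner G T₁) (h2 : IsTree2Spanner G T₂) {x y z : V}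
    (hxy : G.Adj x y) (hyz : G.Adj y z) (hxz : G.Adj x z)
    (he : s(x, y) ∈ T₁.edgeSet) (hf : s(y, z) ∈ T₁.edgeSet) :
    ∃ a b c : V, G.Adj a b ∧ G.Adj b c ∧ G.Adj a c ∧
      phi G T₁ T₂ s(x, y) ∈ ({s(a, b), s(b, c), s(a, c)} : Set (Sym2 V)) ∧
      phi G T₁ T₂ s(y, z) ∈ ({s(a, b), s(b, c), s(a, c)} : Set (Sym2 V)) := by
  by_cases he2 : s(x, y) ∈ T₂.edgeSet
  · by_cases hf2 : s(y, z) ∈ T₂.edgeSet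
    · exact ⟨x, y, z, hxy, hyz, hxz, by simp [phi_eq_of_mem he2], by simp [phi_eq_of_mem hf2]⟩
    · exact phi_adj_mixed h1 h2 hxy hyz hxz he hf he2 hf2
  · by_cases hf2 : s(y, z) ∈ T₂.edgeSet
    · -- symmetric mixed case
      have hf2' : s(z, y) ∈ T₂.edgeSet := Sym2.eq_swap ▸ hf2
      have hf' : s(z, y) ∈ T₁.edgeSet := Sym2.eq_swap ▸ hf
      have he' : s(y, x) ∈ T₁.edgeSet := Sym2.eq_swap ▸ he
      have he2' : s(y, x) ∉ T₂.edgeSet := fun hh => he2 (Sym2.eq_swap ▸ hh)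
      obtain ⟨a, b, c, hab, hbc, hac, H1, H2⟩ :=
        phi_adj_mixed h1 h2 hyz.symm hxy.symm hxz.symm hf' he' hf2' he2'
      refine ⟨a, b, c, hab, hbc, hac, ?_, ?_⟩
      · rwa [show s(y, x) = s(x, y) from Sym2.eq_swap] at H2
      · rwa [show s(z, y) = s(y, z) from Sym2.eq_swap] at H1
    · -- both outside T₂
      obtain ⟨hφe1, m, hxm, hmy, horE⟩ := spec_orient (phi_spec h1 h2 he he2)
      obtain ⟨hφf1, n, hyn, hnz, horF⟩ := spec_orient (phi_spec h1 h2 hf hf2)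
      have hnm : m = n := by
        by_contra hmn
        have hxn : x ≠ n := fun hh => he2 (T₂.mem_edgeSet.2 (hh ▸ hyn).symm)
        have hmz : m ≠ z := fun hh => hf2 (T₂.mem_edgeSet.2 (hh ▸ hmy).symm)
        exact no_path4 h2 hxm hmy hyn hnz hxz hxy.ne hxn hxz.ne hmn hmz hyz.ne
      subst hnm
      have hT1xy : T₁.Adj x y := T₁.mem_edgeSet.1 he
      have hT1yz : T₁.Adj y z := T₁.mem_edgeSet.1 hf
      rcases horE with ⟨hA, hφe⟩ | ⟨hB, hφe⟩
      · rcases horF with ⟨hC, hφf⟩ | ⟨hD, hφf⟩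
        · exact (acyclic_no_tri h1.2.1.IsAcyclic hA hC.symm hT1xy).elim
        · exact (acyclic_diamond h1.2.1.IsAcyclic hA hD.symm hT1xy hT1yz hmy.ne hxz.ne).elim
      · rcases horF with ⟨hC, hφf⟩ | ⟨hD, hφf⟩
        · -- B & C : triangle x, m, z
          refine ⟨x, m, z, h2.1 hxm, h2.1 hnz, hxz, ?_, ?_⟩
          · rw [hφe]; simp [Sym2.eq_swap]
          · rw [hφf]; simp
        · -- B & D : φf = s(m,y) but s(m,y) ∈ T₁ via hB
          exact (hφf1 (hφf.symm ▸ T₁.mem_edgeSet.2 hB.symm)).elim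

lemma tri_norm {a b c : V} {e f : Sym2 V} (hab : G.Adj a b) (hbc : G.Adj b c) (hac : G.Adj a c)
    (he : e ∈ ({s(a, b), s(b, c), s(a, c)} : Set (Sym2 V)))
    (hf : f ∈ ({s(a, b), s(b, c), s(a, c)} : Set (Sym2 V))) (hef : e ≠ f) :
    ∃ x y z : V, G.Adj x y ∧ G.Adj y z ∧ G.Adj x z ∧ e = s(x, y) ∧ f = s(y, z) := by
  simp only [Set.mem_insert_iff, Set.mem_singleton_iff] at he hf
  rcases he with rfl | rfl | rfl <;> rcases hf with rfl | rfl | rfl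
  · exact (hef rfl).elim
  · exact ⟨a, b, c, hab, hbc, hac, rfl, rfl⟩
  · exact ⟨b, a, c, hab.symm, hac, hbc, Sym2.eq_swap, rfl⟩
  · exact ⟨c, b, a, hbc.symm, hab.symm, hac.symm, Sym2.eq_swap, Sym2.eq_swap⟩
  · exact (hef rfl).elim
  · exact ⟨b, c, a, hbc, hac.symm, hab.symm, rfl, Sym2.eq_swap⟩
  · exact ⟨c, a, b, hac.symm, hab, hbc.symm, Sym2.eq_swap, rfl⟩
  · exact ⟨a, c, b, hac, hbc.symm, hab, rfl, Sym2.eq_swap⟩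
  · exact (hef rfl).elim

lemma dual_pres (h1 : IsTree2Spanner G T₁) (h2 : IsTree2Spanner G T₂) {e f : Sym2 V}
    (he : e ∈ T₁.edgeSet) (hf : f ∈ T₁.edgeSet)
    (hadj : (dualGraph G T₁).Adj ⟨e, he⟩ ⟨f, hf⟩) :
    (dualGraph G T₂).Adj ⟨phi G T₁ T₂ e, phi_mem h1 h2 he⟩ ⟨phi G T₁ T₂ f, phi_mem h1 h2 hf⟩ := by
  rw [dualGraph, SimpleGraph.fromRel_adj] at hadj ⊢
  obtain ⟨hne, hrel⟩ := hadj
  have hef : e ≠ f := fun hh => hne (Subtype.ext hh)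
  have hrel' : ∃ a b c : V, G.Adj a b ∧ G.Adj b c ∧ G.Adj a c ∧
      e ∈ ({s(a, b), s(b, c), s(a, c)} : Set (Sym2 V)) ∧
      f ∈ ({s(a, b), s(b, c), s(a, c)} : Set (Sym2 V)) := by
    rcases hrel with ⟨a, b, c, h₁, h₂, h₃, h₄, h₅⟩ | ⟨a, b, c, h₁, h₂, h₃, h₄, h₅⟩
    exacts [⟨a, b, c, h₁, h₂, h₃, h₄, h₅⟩, ⟨a, b, c, h₁, h₂, h₃, h₅, h₄⟩]
  obtain ⟨a, b, c, hab, hbc, hac, hea, hfa⟩ := hrel'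
  obtain ⟨x, y, z, hxy, hyz, hxz, rfl, rfl⟩ := tri_norm hab hbc hac hea hfa hef
  refine ⟨?_, Or.inl ?_⟩
  · intro hh
    apply hef
    have := congrArg Subtype.val hh
    simp only at this
    calc s(x,y) = phi G T₂ T₁ (phi G T₁ T₂ s(x,y)) := (phi_inv h1 h2 he).symm
      _ = phi G T₂ T₁ (phi G T₁ T₂ s(y,z)) := by rw [this]
      _ = s(y,z) := phi_inv h1 h2 hf
  · exact phi_adj h1 h2 hxy hyz hxz he hf

end TwoSpannerAux

open TwoSpannerAux in
/-- Any two tree 2-spanners of the same finite simple graph have isomorphic dual graphs. -/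
theorem stmt_2 {V : Type} [Fintype V] (G T₁ T₂ : SimpleGraph V)
    (h1 : IsTree2Spanner G T₁) (h2 : IsTree2Spanner G T₂) :
    Nonempty (dualGraph G T₁ ≃g dualGraph G T₂) := by
  refine ⟨⟨⟨fun e => ⟨phi G T₁ T₂ e.1, phi_mem h1 h2 e.2⟩,
    fun f => ⟨phi G T₂ T₁ f.1, phi_mem h2 h1 f.2⟩, ?_, ?_⟩, ?_⟩⟩
  · intro e
    exact Subtype.ext (phi_inv h1 h2 e.2)
  · intro f
    exact Subtype.ext (phi_inv h2 h1 f.2)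
  · intro e f
    constructor
    · intro hadj
      have := dual_pres h2 h1 (phi_mem h1 h2 e.2) (phi_mem h1 h2 f.2) hadj
      have he : (⟨phi G T₂ T₁ (phi G T₁ T₂ e.1), phi_mem h2 h1 (phi_mem h1 h2 e.2)⟩ : T₁.edgeSet) = e :=
        Subtype.ext (phi_inv h1 h2 e.2)
      have hf : (⟨phi G T₂ T₁ (phi G T₁ T₂ f.1), phi_mem h2 h1 (phi_mem h1 h2 f.2)⟩ : T₁.edgeSet) = f :=
        Subtype.ext (phi_inv h1 h2 f.2)
      rwa [he, hf] at this
    · intro hadj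
      exact dual_pres h1 h2 e.2 f.2 hadj
end

section
/- For every finite simple graph Λ there exists a finite simple graph Γ such that BB(Γ) is isomorphic to A(Λ); that is, every right-angled Artin group arises as a Bestvina–Brady group. -/
/-! Let `Γ` be the cone over `Λ`, with apex `t`. Since `t` is central, `x ↦ x t^(-χ x)` is
an endomorphism of `A(Γ)`; it factors as `A(Γ) → A(Λ) → A(Γ)`, where the first map kills `t`
and the second sends `v ↦ v t⁻¹`. The second map lands in `BB(Γ)` and is a section of the
first, and on `BB(Γ) = ker χ` the composite is the identity, so the first map restricts to
an isomorphism `BB(Γ) ≃* A(Λ)`. -/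

@[simps]
def mulZPowOfMemCenter {G : Type*} [Group G] {z : G} (hz : z ∈ Subgroup.center G)
    (χ : G →* Multiplicative ℤ) : G →* G where
  toFun x := x * z ^ (χ x).toAdd
  map_one' := by simp
  map_mul' x y := by
    have hzy : Commute y (z ^ (χ x).toAdd) :=
      Commute.zpow_right (Subgroup.mem_center_iff.1 hz y) _
    simp only [map_mul, toAdd_mul, zpow_add]
    rw [mul_assoc x (z ^ _), ← mul_assoc (z ^ _) y, ← hzy.eq]
    simp only [mul_assoc]

namespace RAAG

variable {V : Type} {G : SimpleGraph V} {H : Type*} [Group H]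

theorem commute_raagGen_of_adj {v w : V} (h : G.Adj v w) :
    Commute (raagGen G v) (raagGen G w) := by
  have hrel := PresentedGroup.one_of_mem (rels := raagRels G) ⟨v, w, h, rfl⟩
  simp only [map_mul, map_inv] at hrel
  exact commutatorElement_eq_one_iff_mul_comm.1 hrel

def lift (f : V → H) (hf : ∀ v w, G.Adj v w → Commute (f v) (f w)) : RAAG G →* H :=
  PresentedGroup.toGroup (by
    rintro r ⟨v, w, h, rfl⟩
    simp only [map_mul, map_inv, FreeGroup.lift_apply_of]
    exact commutatorElement_eq_one_iff_mul_comm.2 (hf v w h))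

@[simp] theorem lift_raagGen (f : V → H) (hf : ∀ v w, G.Adj v w → Commute (f v) (f w))
    (v : V) :
    lift f hf (raagGen G v) = f v :=
  PresentedGroup.toGroup.of _

@[ext] theorem hom_ext_s4 {φ ψ : RAAG G →* H} (h : ∀ v, φ (raagGen G v) = ψ (raagGen G v)) :
    φ = ψ :=
  PresentedGroup.ext h

theorem raagGen_mem_center_of_forall_adj {u : V} (hu : ∀ v, v ≠ u → G.Adj u v) :
    raagGen G u ∈ Subgroup.center (RAAG G) := by
  rw [← Subgroup.centralizer_univ, ← Subgroup.coe_top,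
    ← PresentedGroup.closure_range_of (rels := raagRels G), Subgroup.centralizer_closure,
    Subgroup.mem_centralizer_iff]
  rintro - ⟨v, rfl⟩
  by_cases hvu : v = u
  · subst hvu; rfl
  · exact (commute_raagGen_of_adj (hu v hvu)).eq.symm

end RAAG

@[simp] theorem bbgChar_raagGen_s4 {V : Type} (G : SimpleGraph V) (v : V) :
    bbgChar G (raagGen G v) = Multiplicative.ofAdd (1 : ℤ) :=
  PresentedGroup.toGroup.of _

section Cone

variable {V : Type} (Λ : SimpleGraph V)

/-- The cone over `Λ`, with apex `none`. -/
def coneGraph : SimpleGraph (Option V) where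
  Adj
    | some v, some w => Λ.Adj v w
    | none, none => False
    | _, _ => True
  symm := by
    constructor
    rintro (_ | v) (_ | w) h
    exacts [h, trivial, trivial, h.symm]
  loopless := by
    constructor
    rintro (_ | v) h
    exacts [h, Λ.irrefl h]

theorem coneApex_mem_center :
    raagGen (coneGraph Λ) none ∈ Subgroup.center (RAAG (coneGraph Λ)) :=
  RAAG.raagGen_mem_center_of_forall_adj fun
    | some _, _ => trivial
    | none, h => absurd rfl h

def coneRetract : RAAG (coneGraph Λ) →* RAAG Λ :=
  RAAG.lift (fun a => a.elim 1 (raagGen Λ)) fun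
    | some _, some _, h => RAAG.commute_raagGen_of_adj h
    | none, _, _ => Commute.one_left _
    | some _, none, _ => Commute.one_right _

def coneSection : RAAG Λ →* RAAG (coneGraph Λ) :=
  RAAG.lift (fun v => raagGen (coneGraph Λ) (some v) * (raagGen (coneGraph Λ) none)⁻¹)
    fun v w h => by
      have ht : ∀ g, Commute (raagGen (coneGraph Λ) none)⁻¹ g := fun g =>
        Commute.inv_left (Commute.symm (Subgroup.mem_center_iff.1 (coneApex_mem_center Λ) g))
      have hvw : Commute (raagGen (coneGraph Λ) (some v)) (raagGen (coneGraph Λ) (some w)) :=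
        RAAG.commute_raagGen_of_adj (G := coneGraph Λ) h
      exact (hvw.mul_right (ht _).symm).mul_left ((ht _).mul_right (Commute.refl _))

theorem coneRetract_comp_coneSection :
    (coneRetract Λ).comp (coneSection Λ) = MonoidHom.id (RAAG Λ) := by
  ext v
  simp [coneRetract, coneSection]

theorem coneSection_mem_BBG (a : RAAG Λ) : coneSection Λ a ∈ BBG (coneGraph Λ) := by
  suffices (bbgChar (coneGraph Λ)).comp (coneSection Λ) = 1 from DFunLike.congr_fun this a
  ext v
  simp [coneSection]

theorem coneSection_comp_coneRetract :
    (coneSection Λ).comp (coneRetract Λ) =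
      mulZPowOfMemCenter (inv_mem (coneApex_mem_center Λ)) (bbgChar (coneGraph Λ)) := by
  ext (_ | v) <;> simp [coneRetract, coneSection]

def coneBBGEquiv : BBG (coneGraph Λ) ≃* RAAG Λ :=
  MonoidHom.toMulEquiv ((coneRetract Λ).comp (BBG (coneGraph Λ)).subtype)
    ((coneSection Λ).codRestrict _ (coneSection_mem_BBG Λ))
    (by
      ext ⟨x, hx⟩
      have hx' : bbgChar (coneGraph Λ) x = 1 := hx
      simpa [hx'] using DFunLike.congr_fun (coneSection_comp_coneRetract Λ) x)
    (by
      ext v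
      simpa using DFunLike.congr_fun (coneRetract_comp_coneSection Λ) (raagGen Λ v))

end Cone

/-- Every RAAG arises as a Bestvina–Brady group. -/
theorem stmt_4 {V : Type} [Fintype V] (Λ : SimpleGraph V) :
    ∃ (W : Type) (_ : Fintype W) (Γ : SimpleGraph W),
      Nonempty (↥(BBG Γ) ≃* RAAG Λ) :=
  ⟨Option V, inferInstance, coneGraph Λ, ⟨coneBBGEquiv Λ⟩⟩
end

section
/- Let Γ be a finite simple graph and T a tree 2-spanner of Γ. Then every triangle of Γ contains either no edge of T or exactly two edges of T. -/
open SimpleGraph in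

private lemma aux_dist2 {V : Type} (G T : SimpleGraph V)
    (hle : T ≤ G) (htree : T.IsTree) (hsp : ∀ x y : V, T.dist x y ≤ 2 * G.dist x y)
    (x z : V) (hxz : G.Adj x z) (hnadj : ¬ T.Adj x z) :
    ∃ m : V, T.Adj x m ∧ T.Adj m z := by
  have hne : x ≠ z := hxz.ne
  have hd : T.dist x z ≤ 2 := by
    have := hsp x z
    rwa [(SimpleGraph.dist_eq_one_iff_adj).2 hxz, mul_one] at this
  have hpos : T.dist x z ≠ 0 := by
    intro h0
    exact hne ((htree.isConnected.dist_eq_zero_iff ).1 h0)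
  have h1 : T.dist x z ≠ 1 := fun h1 => hnadj (SimpleGraph.dist_eq_one_iff_adj.1 h1)
  have h2 : T.dist x z = 2 := by omega
  obtain ⟨p, hp⟩ := (htree.isConnected x z).exists_walk_length_eq_dist
  rw [h2] at hp
  cases p with
  | nil => simp at hp
  | cons h q =>
    cases q with
    | nil => simp at hp
    | cons h' q' =>
      cases q' with
      | nil => exact ⟨_, h, h'⟩
      | cons h'' q'' => simp [SimpleGraph.Walk.length_cons] at hp

private lemma aux_three {V : Type} (T : SimpleGraph V) {a b c : V} (hac : T.IsAcyclic)
    (h1 : T.Adj a b) (h2 : T.Adj b c) (h3 : T.Adj a c) : False := by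
  have hp1 : (SimpleGraph.Walk.cons h3 SimpleGraph.Walk.nil).IsPath := by
    simp [SimpleGraph.Walk.isPath_def, h3.ne]
  have hp2 : (SimpleGraph.Walk.cons h1 (SimpleGraph.Walk.cons h2 SimpleGraph.Walk.nil)).IsPath := by
    simp [SimpleGraph.Walk.isPath_def, h1.ne, h2.ne, h3.ne]
  have := (SimpleGraph.isAcyclic_iff_path_unique.1 hac) ⟨_, hp1⟩ ⟨_, hp2⟩
  have hlen := congrArg (fun p : T.Path a c => p.1.length) this
  simp at hlen

private lemma aux_one {V : Type} (G T : SimpleGraph V)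
    (hle : T ≤ G) (htree : T.IsTree) (hsp : ∀ x y : V, T.dist x y ≤ 2 * G.dist x y)
    {x y z : V} (hxy : T.Adj x y) (hnyz : ¬ T.Adj y z) (hnxz : ¬ T.Adj x z)
    (gyz : G.Adj y z) (gxz : G.Adj x z) : False := by
  obtain ⟨m, hxm, hmz⟩ := aux_dist2 G T hle htree hsp x z gxz hnxz
  obtain ⟨n, hyn, hnz⟩ := aux_dist2 G T hle htree hsp y z gyz hnyz
  have hxn : x ≠ n := fun h => hnxz (h ▸ hnz)
  have hp1 : (SimpleGraph.Walk.cons hxm (SimpleGraph.Walk.cons hmz SimpleGraph.Walk.nil)).IsPath := by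
    simp [SimpleGraph.Walk.isPath_def, hxm.ne, hmz.ne, gxz.ne]
  have hp2 : (SimpleGraph.Walk.cons hxy (SimpleGraph.Walk.cons hyn
      (SimpleGraph.Walk.cons hnz SimpleGraph.Walk.nil))).IsPath := by
    simp [SimpleGraph.Walk.isPath_def, hxy.ne, hyn.ne, hnz.ne, gxz.ne, gyz.ne, hxn]
  have := (SimpleGraph.isAcyclic_iff_path_unique.1 htree.IsAcyclic) ⟨_, hp1⟩ ⟨_, hp2⟩
  have hlen := congrArg (fun p : T.Path x z => p.1.length) this
  simp at hlen


/-- For a tree 2-spanner `T` of `G`, every triangle of `G` contains either no edge of `T`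
or exactly two edges of `T`. -/
theorem stmt_9 {V : Type} [Fintype V] (G T : SimpleGraph V) (hT : IsTree2Spanner G T)
    (a b c : V) (hab : G.Adj a b) (hbc : G.Adj b c) (hac : G.Adj a c) :
    (¬T.Adj a b ∧ ¬T.Adj b c ∧ ¬T.Adj a c) ∨
    (T.Adj a b ∧ T.Adj b c ∧ ¬T.Adj a c) ∨
    (T.Adj a b ∧ ¬T.Adj b c ∧ T.Adj a c) ∨
    (¬T.Adj a b ∧ T.Adj b c ∧ T.Adj a c) := by
  obtain ⟨hle, htree, hsp⟩ := hT
  by_cases t1 : T.Adj a b <;> by_cases t2 : T.Adj b c <;> by_cases t3 : T.Adj a c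
  · exact absurd (aux_three T htree.IsAcyclic t1 t2 t3) id
  · exact Or.inr (Or.inl ⟨t1, t2, t3⟩)
  · exact Or.inr (Or.inr (Or.inl ⟨t1, t2, t3⟩))
  · exact absurd (aux_one G T hle htree hsp t1 t2 t3 hbc hac) id
  · exact Or.inr (Or.inr (Or.inr ⟨t1, t2, t3⟩))
  · exact absurd (aux_one G T hle htree hsp t2 (fun h => t3 h.symm) (fun h => t1 h.symm) hac.symm hab.symm) id
  · exact absurd (aux_one G T hle htree hsp t3 (fun h => t2 h.symm) t1 hbc.symm hab) id
  · exact Or.inl ⟨t1, t2, t3⟩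
end

section
/- Let Γ be a finite simple graph and T a tree 2-spanner of Γ. If {x,y,z} is a triangle of Γ none of whose three edges belongs to T, then there exists a vertex w such that the edges (w,x), (w,y), and (w,z) all belong to T; in particular, the four vertices w,x,y,z are pairwise adjacent in Γ and span a complete subgraph K₄. -/
/-- If the distance between two vertices is 2, there is a common neighbor. -/
lemma exists_mid {V : Type} (T : SimpleGraph V) {a b : V} (h : T.dist a b = 2) :
    ∃ w, T.Adj a w ∧ T.Adj w b := by
  have hr : T.Reachable a b := by
    by_contra hc
    rw [SimpleGraph.dist_eq_zero_of_not_reachable hc] at h; omega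
  obtain ⟨p, hp⟩ := hr.exists_walk_length_eq_dist
  rw [h] at hp
  cases p with
  | nil => simp at hp
  | cons h1 q =>
    cases q with
    | nil => simp at hp
    | cons h2 r =>
      cases r with
      | nil => exact ⟨_, h1, h2⟩
      | cons h3 s => simp [SimpleGraph.Walk.length_cons] at hp

/-- If a triangle of `G` contains no edge of a tree 2-spanner `T`, then there is a vertex `w`
joined in `T` to all three of its vertices; in particular the four vertices span a `K₄`
in `G`. -/
theorem stmt_10 {V : Type} [Fintype V] (G T : SimpleGraph V) (hT : IsTree2Spanner G T)
    (x y z : V) (hxy : G.Adj x y) (hyz : G.Adj y z) (hxz : G.Adj x z)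
    (h1 : ¬T.Adj x y) (h2 : ¬T.Adj y z) (h3 : ¬T.Adj x z) :
    ∃ w : V, T.Adj w x ∧ T.Adj w y ∧ T.Adj w z ∧
      G.Adj w x ∧ G.Adj w y ∧ G.Adj w z := by
  obtain ⟨hle, htree, hd⟩ := hT
  have hconn := htree.isConnected
  have d2 : ∀ a b : V, G.Adj a b → ¬T.Adj a b → T.dist a b = 2 := by
    intro a b hab hnab
    have hg1 : G.dist a b = 1 := by rw [SimpleGraph.dist_eq_one_iff_adj]; exact hab
    have := hd a b
    rw [hg1] at this
    have h0 : T.dist a b ≠ 0 := by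
      rw [SimpleGraph.dist_ne_zero_iff_ne_and_reachable]
      exact ⟨hab.ne, hconn.preconnected a b⟩
    have hn1 : T.dist a b ≠ 1 := fun h => hnab (SimpleGraph.dist_eq_one_iff_adj.mp h)
    omega
  obtain ⟨w, hxw, hwy⟩ := exists_mid T (d2 x y hxy h1)
  obtain ⟨w', hyw', hw'z⟩ := exists_mid T (d2 y z hyz h2)
  obtain ⟨w'', hxw'', hw''z⟩ := exists_mid T (d2 x z hxz h3)
  have hww' : w = w' := by
    by_contra hne
    have hwz : w ≠ z := fun h => h2 (h ▸ hwy).symm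
    have hw'x : w' ≠ x := fun h => h1 (h ▸ hyw').symm
    have hp1 : (SimpleGraph.Walk.cons hxw (.cons hwy (.cons hyw'
        (.cons hw'z .nil)))).IsPath := by
      simp [SimpleGraph.Walk.isPath_def]
      refine ⟨⟨hxw.ne, hxy.ne, Ne.symm hw'x, hxz.ne⟩, ⟨hwy.ne, hne, hwz⟩,
        ⟨hyw'.ne, hyz.ne⟩, hw'z.ne⟩
    have hp2 : (SimpleGraph.Walk.cons hxw'' (.cons hw''z .nil)).IsPath := by
      simp [SimpleGraph.Walk.isPath_def]
      exact ⟨⟨hxw''.ne, hxz.ne⟩, hw''z.ne⟩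
    have heq := (htree.existsUnique_path x z).unique hp1 hp2
    have hl := congrArg SimpleGraph.Walk.length heq
    simp at hl
  subst hww'
  exact ⟨w, hxw.symm, hwy, hw'z, hle hxw.symm, hle hwy, hle hw'z⟩
end

section
/- Let Γ be a finite simple graph and T a tree 2-spanner of Γ, and let C be an induced (chordless) cycle of Γ with at least 4 vertices. Then no edge of C belongs to T, and there exists a vertex w of Γ not on C such that for every vertex v of C the edge (w,v) belongs to T; in particular, the cycle C is contained in the star of w in Γ. -/
open SimpleGraph

lemma ZMod.natCast_ne_zero_of_pos_of_lt {n k : ℕ} (hk : 0 < k) (hkn : k < n) :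
    (k : ZMod n) ≠ 0 := by
  rw [Ne, ZMod.natCast_eq_zero_iff]
  exact fun h => absurd (Nat.le_of_dvd hk h) (by omega)

lemma ZMod.apply_eq_apply_zero_of_forall_apply_add_one {n : ℕ} [NeZero n] {α : Type*}
    {g : ZMod n → α} (h : ∀ i, g (i + 1) = g i) (i : ZMod n) : g i = g 0 := by
  rw [← ZMod.natCast_zmod_val i]
  induction i.val with
  | zero => rw [Nat.cast_zero]
  | succ k ih => rw [Nat.cast_succ, h, ih]

lemma Function.Injective.eq_of_sym2_mk_add_one_eq {n : ℕ} {V : Type*} {f : ZMod n → V}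
    (hf : f.Injective) (hn : 3 ≤ n) {i j : ZMod n}
    (h : s(f i, f (i + 1)) = s(f j, f (j + 1))) : i = j := by
  rcases Sym2.eq_iff.mp h with ⟨h, -⟩ | ⟨h, h'⟩
  · exact hf h
  · have h2 : ((2 : ℕ) : ZMod n) ≠ 0 := ZMod.natCast_ne_zero_of_pos_of_lt two_pos (by omega)
    exact absurd (by push_cast; linear_combination hf h' - hf h) h2

namespace SimpleGraph

variable {V : Type*} {G : SimpleGraph V}

lemma Reachable.adj_or_exists_adj_adj_of_dist_le_two {u v : V} (hr : G.Reachable u v)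
    (hne : u ≠ v) (h : G.dist u v ≤ 2) : G.Adj u v ∨ ∃ w, G.Adj u w ∧ G.Adj w v := by
  by_contra! hfar
  have hcommon : G.commonNeighbors u v = ∅ :=
    Set.eq_empty_of_forall_notMem fun w hw =>
      hfar.2 w (G.mem_commonNeighbors.mp hw).1 (G.mem_commonNeighbors.mp hw).2.symm
  have hlt := two_lt_edist_iff.mpr ⟨hne, hfar.1, hcommon⟩
  rw [← hr.coe_dist_eq_edist] at hlt
  exact absurd h (not_le.mpr (by exact_mod_cast hlt))

lemma reachable_add_one_of_forall_ne {n : ℕ} [NeZero n] (f : ZMod n → V) (i : ZMod n)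
    (h : ∀ j ≠ i, G.Reachable (f j) (f (j + 1))) : G.Reachable (f i) (f (i + 1)) := by
  have around : ∀ k : ℕ, k < n → G.Reachable (f (i + 1)) (f (i + 1 + k)) := by
    intro k hk
    induction k with
    | zero => simp
    | succ k ih =>
      have hne : i + 1 + k ≠ i := fun hi =>
        ZMod.natCast_ne_zero_of_pos_of_lt k.succ_pos hk (by push_cast; linear_combination hi)
      simpa [add_assoc] using (ih (by omega)).trans (h _ hne)
  have hlast := around (n - 1) (Nat.sub_lt (NeZero.pos n) one_pos)
  rw [Nat.cast_pred (NeZero.pos n), ZMod.natCast_self] at hlast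
  simpa using hlast.symm

lemma reachable_deleteEdges_of_adj_of_adj {e : Sym2 V} {x w y : V} (hxw : G.Adj x w)
    (hwy : G.Adj w y) (hxw_ne : s(x, w) ≠ e) (hwy_ne : s(w, y) ≠ e) :
    (G.deleteEdges {e}).Reachable x y :=
  (deleteEdges_adj.mpr ⟨hxw, hxw_ne⟩).reachable.trans (deleteEdges_adj.mpr ⟨hwy, hwy_ne⟩).reachable

/-- A chain of reachabilities around a cycle in which the bridge `s(u, v)` is needed for step `i`
must need it for some other step as well. -/
lemma IsAcyclic.exists_ne_not_reachable_deleteEdges (hG : G.IsAcyclic) {n : ℕ} [NeZero n]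
    {f : ZMod n → V} {u v : V} (huv : G.Adj u v) (i : ZMod n)
    (hu : (G.deleteEdges {s(u, v)}).Reachable u (f i))
    (hv : (G.deleteEdges {s(u, v)}).Reachable (f (i + 1)) v) :
    ∃ j ≠ i, ¬(G.deleteEdges {s(u, v)}).Reachable (f j) (f (j + 1)) := by
  by_contra! h
  exact isBridge_iff.mp (isAcyclic_iff_forall_adj_isBridge.mp hG huv)
    (hu.trans ((reachable_add_one_of_forall_ne f i h).trans hv))

lemma IsAcyclic.not_adj_add_one_of_forall_adj_or_exists_adj_adj (hG : G.IsAcyclic) {n : ℕ}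
    (hn : 3 ≤ n) {f : ZMod n → V} (hf : f.Injective)
    (hstep : ∀ j, G.Adj (f j) (f (j + 1)) ∨
      ∃ w, (∀ m, w ≠ f m) ∧ G.Adj (f j) w ∧ G.Adj w (f (j + 1)))
    (i : ZMod n) : ¬G.Adj (f i) (f (i + 1)) := by
  have : NeZero n := ⟨by omega⟩
  intro hi
  obtain ⟨j, hji, hj⟩ := hG.exists_ne_not_reachable_deleteEdges hi i .rfl .rfl
  apply hj
  rcases hstep j with hadj | ⟨w, hw, h1, h2⟩
  · exact (deleteEdges_adj.mpr ⟨hadj, fun h => hji (hf.eq_of_sym2_mk_add_one_eq hn h)⟩).reachable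
  · have hw' : w ∉ s(f i, f (i + 1)) := by
      rw [Sym2.mem_iff]
      exact fun h => h.elim (hw _) (hw _)
    exact reachable_deleteEdges_of_adj_of_adj h1 h2 (fun h => hw' (h ▸ Sym2.mem_mk_right _ _))
      (fun h => hw' (h ▸ Sym2.mem_mk_left _ _))

lemma IsAcyclic.apply_add_one_eq_of_adj_of_adj (hG : G.IsAcyclic) {n : ℕ} (hn : 2 ≤ n)
    {f w : ZMod n → V} (hf : f.Injective) (hw : ∀ j m, w j ≠ f m)
    (h1 : ∀ j, G.Adj (f j) (w j)) (h2 : ∀ j, G.Adj (w j) (f (j + 1))) (i : ZMod n) :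
    w (i + 1) = w i := by
  have : NeZero n := ⟨by omega⟩
  by_contra hne
  have hsucc : f i ≠ f (i + 1) := hf.ne fun h => ZMod.natCast_ne_zero_of_pos_of_lt one_pos hn
    (by push_cast; linear_combination -h)
  have hu : (G.deleteEdges {s(w i, f (i + 1))}).Reachable (w i) (f i) :=
    (deleteEdges_adj.mpr ⟨(h1 i).symm, fun h => hsucc (Sym2.congr_right.mp h)⟩).reachable
  obtain ⟨j, hji, hj⟩ := hG.exists_ne_not_reachable_deleteEdges (h2 i) i hu .rfl
  refine hj (reachable_deleteEdges_of_adj_of_adj (h1 j) (h2 j) ?_ ?_) <;> rw [Ne, Sym2.eq_iff]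
  · rintro (⟨h, -⟩ | ⟨h, h'⟩)
    · exact hw i j h.symm
    · exact hne (hf h ▸ h')
  · rintro (⟨-, h⟩ | ⟨h, -⟩)
    · exact hji (add_right_cancel (hf h))
    · exact hw j (i + 1) h

end SimpleGraph

lemma IsTree2Spanner.adj_or_exists_adj_adj {V : Type} {G T : SimpleGraph V}
    (hT : IsTree2Spanner G T) {x y : V} (hxy : G.Adj x y) :
    T.Adj x y ∨ ∃ w, T.Adj x w ∧ T.Adj w y :=
  (hT.2.1.connected x y).adj_or_exists_adj_adj_of_dist_le_two hxy.ne
    (by simpa [dist_eq_one_iff_adj.mpr hxy] using hT.2.2 x y)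

def SimpleGraph.IsInducedCycle {V : Type*} (G : SimpleGraph V) {n : ℕ} (f : ZMod n → V) : Prop :=
  ∀ i j : ZMod n, G.Adj (f i) (f j) ↔ (j = i + 1 ∨ i = j + 1)

namespace SimpleGraph.IsInducedCycle

variable {V : Type*} {G : SimpleGraph V} {n : ℕ} {f : ZMod n → V}

lemma adj_add_one (hcyc : G.IsInducedCycle f) (i : ZMod n) : G.Adj (f i) (f (i + 1)) :=
  (hcyc i (i + 1)).mpr (Or.inl rfl)

lemma ne_of_adj_of_adj (hcyc : G.IsInducedCycle f) (hn : 4 ≤ n) {i : ZMod n} {w : V}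
    (h1 : G.Adj (f i) w) (h2 : G.Adj w (f (i + 1))) (m : ZMod n) : w ≠ f m := by
  rintro rfl
  have one_ne : ((1 : ℕ) : ZMod n) ≠ 0 := ZMod.natCast_ne_zero_of_pos_of_lt one_pos (by omega)
  have three_ne : ((3 : ℕ) : ZMod n) ≠ 0 :=
    ZMod.natCast_ne_zero_of_pos_of_lt three_pos (by omega)
  rcases (hcyc i m).mp h1 with hm | hm <;> rcases (hcyc m (i + 1)).mp h2 with hm' | hm'
  · exact one_ne (by push_cast; linear_combination -(hm + hm'))
  · exact one_ne (by push_cast; linear_combination hm - hm')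
  · exact one_ne (by push_cast; linear_combination hm' - hm)
  · exact three_ne (by push_cast; linear_combination -(hm + hm'))

end SimpleGraph.IsInducedCycle

theorem stmt_11_general {V : Type} (G T : SimpleGraph V) (hT : IsTree2Spanner G T)
    (n : ℕ) (hn : 4 ≤ n) (f : ZMod n → V) (hinj : Function.Injective f)
    (hcyc : ∀ i j : ZMod n, G.Adj (f i) (f j) ↔ (j = i + 1 ∨ i = j + 1)) :
    (∀ i : ZMod n, ¬T.Adj (f i) (f (i + 1))) ∧
    ∃ w : V, (∀ i : ZMod n, w ≠ f i) ∧ (∀ i : ZMod n, T.Adj w (f i)) := by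
  have hcyc : G.IsInducedCycle f := hcyc
  have hacyc := hT.2.1.isAcyclic
  have hstep (i : ZMod n) : T.Adj (f i) (f (i + 1)) ∨
      ∃ w, (∀ m, w ≠ f m) ∧ T.Adj (f i) w ∧ T.Adj w (f (i + 1)) :=
    (hT.adj_or_exists_adj_adj (hcyc.adj_add_one i)).imp id fun ⟨w, h1, h2⟩ =>
      ⟨w, hcyc.ne_of_adj_of_adj hn (hT.1 h1) (hT.1 h2), h1, h2⟩
  have hno := hacyc.not_adj_add_one_of_forall_adj_or_exists_adj_adj (by omega) hinj hstep
  choose w hw hw1 hw2 using fun i => (hstep i).resolve_left (hno i)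
  have : NeZero n := ⟨by omega⟩
  have hconst := ZMod.apply_eq_apply_zero_of_forall_apply_add_one
    (hacyc.apply_add_one_eq_of_adj_of_adj (by omega) hinj hw hw1 hw2)
  exact ⟨hno, w 0, hw 0, fun i => hconst i ▸ (hw1 i).symm⟩

/-- Let `T` be a tree 2-spanner of `G` and let `f : ZMod n → V` (with `n ≥ 4`) be an induced
(chordless) cycle of `G`. Then no edge of the cycle lies in `T`, and there is a vertex `w` off
the cycle joined in `T` to every vertex of the cycle; in particular the cycle lies in the star
of `w`. -/
theorem stmt_11 {V : Type} [Fintype V] (G T : SimpleGraph V) (hT : IsTree2Spanner G T)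
    (n : ℕ) (hn : 4 ≤ n) (f : ZMod n → V) (hinj : Function.Injective f)
    (hcyc : ∀ i j : ZMod n, G.Adj (f i) (f j) ↔ (j = i + 1 ∨ i = j + 1)) :
    (∀ i : ZMod n, ¬T.Adj (f i) (f (i + 1))) ∧
    ∃ w : V, (∀ i : ZMod n, w ≠ f i) ∧ (∀ i : ZMod n, T.Adj w (f i)) :=
  stmt_11_general G T hT n hn f hinj hcyc
end

section
/- Let Γ be a finite simple graph containing no clique on 4 vertices. If Γ admits a tree 2-spanner, then every triangle of Γ contains at least one edge that lies in exactly one triangle of Γ; equivalently, Γ has no crowned triangles. -/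
open SimpleGraph

namespace Stmt12Aux

variable {V : Type} {T : SimpleGraph V}

lemma path1 {u v : V} (h : T.Adj u v) : (Walk.cons h Walk.nil).IsPath := by
  simp [Walk.isPath_def, h.ne]

lemma path2 {u m v : V} (h1 : T.Adj u m) (h2 : T.Adj m v) (huv : u ≠ v) :
    (Walk.cons h1 (Walk.cons h2 Walk.nil)).IsPath := by
  simp [Walk.isPath_def, h1.ne, h2.ne, huv]

lemma path3 {u m n v : V} (h1 : T.Adj u m) (h2 : T.Adj m n) (h3 : T.Adj n v)
    (hun : u ≠ n) (huv : u ≠ v) (hmv : m ≠ v) :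
    (Walk.cons h1 (Walk.cons h2 (Walk.cons h3 Walk.nil))).IsPath := by
  simp [Walk.isPath_def, h1.ne, h2.ne, h3.ne, hun, huv, hmv]

lemma path4 {u m w n v : V} (h1 : T.Adj u m) (h2 : T.Adj m w) (h3 : T.Adj w n)
    (h4 : T.Adj n v) (huw : u ≠ w) (hun : u ≠ n) (huv : u ≠ v) (hmn : m ≠ n)
    (hmv : m ≠ v) (hwv : w ≠ v) :
    (Walk.cons h1 (Walk.cons h2 (Walk.cons h3 (Walk.cons h4 Walk.nil)))).IsPath := by
  simp [Walk.isPath_def, h1.ne, h2.ne, h3.ne, h4.ne, huw, hun, huv, hmn, hmv, hwv]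

lemma len_ne (ht : T.IsTree) {u v : V} {p q : T.Walk u v} (hp : p.IsPath) (hq : q.IsPath)
    (h : p.length ≠ q.length) : False :=
  h (congrArg Walk.length ((ht.existsUnique_path u v).unique hp hq))

lemma twoMid (ht : T.IsTree) {u v m n : V} (h1 : T.Adj u m) (h2 : T.Adj m v)
    (h3 : T.Adj u n) (h4 : T.Adj n v) (huv : u ≠ v) (hmn : m ≠ n) : False := by
  have := (ht.existsUnique_path u v).unique (path2 h1 h2 huv) (path2 h3 h4 huv)
  have := congrArg Walk.support this
  simp at this
  exact hmn this

lemma walkShort : ∀ {u v : V} (p : T.Walk u v), p.length ≤ 2 →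
    u = v ∨ T.Adj u v ∨ ∃ m, T.Adj u m ∧ T.Adj m v := by
  intro u v p hp
  cases p with
  | nil => exact Or.inl rfl
  | cons h q =>
    cases q with
    | nil => exact Or.inr (Or.inl h)
    | cons h' r =>
      cases r with
      | nil => exact Or.inr (Or.inr ⟨_, h, h'⟩)
      | cons h'' s => simp [Walk.length_cons] at hp

lemma trich (ht : T.IsTree) {u v : V} (h : T.dist u v ≤ 2) (hne : u ≠ v) :
    T.Adj u v ∨ ∃ m, T.Adj u m ∧ T.Adj m v := by
  obtain ⟨p, hp⟩ := (ht.isConnected.preconnected u v).exists_walk_length_eq_dist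
  rcases walkShort p (hp ▸ h) with h1 | h2
  · exact absurd h1 hne
  · exact h2

lemma inj4 {a b c d : V} (h1 : a ≠ b) (h2 : a ≠ c) (h3 : a ≠ d) (h4 : b ≠ c)
    (h5 : b ≠ d) (h6 : c ≠ d) : Function.Injective ![a, b, c, d] := by
  intro i j hij
  fin_cases i <;> fin_cases j <;> simp_all



lemma distle {V : Type} {G T : SimpleGraph V} (hsp : ∀ x y, T.dist x y ≤ 2 * G.dist x y)
    {u v : V} (g : G.Adj u v) : T.dist u v ≤ 2 := by
  have := hsp u v
  rwa [SimpleGraph.dist_eq_one_iff_adj.mpr g, mul_one] at this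

lemma keyB {V : Type} (G T : SimpleGraph V)
    (hK4 : ¬∃ a b c d : V, Function.Injective ![a, b, c, d] ∧
      G.Adj a b ∧ G.Adj a c ∧ G.Adj a d ∧ G.Adj b c ∧ G.Adj b d ∧ G.Adj c d)
    (hle : T ≤ G) (ht : T.IsTree) (hsp : ∀ x y, T.dist x y ≤ 2 * G.dist x y)
    (x y z : V) (gxy : G.Adj x y) (gyz : G.Adj y z) (gxz : G.Adj x z)
    (txy : T.Adj x y) (tyz : T.Adj y z) :
    G.Adj x z ∧ ∃! w : V, G.Adj x w ∧ G.Adj z w := by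
  have hxz : x ≠ z := gxz.ne
  have txz : ¬T.Adj x z := fun h =>
    len_ne ht (path1 h) (path2 txy tyz hxz) (by simp)
  refine ⟨gxz, y, ⟨gxy, gyz.symm⟩, ?_⟩
  rintro w ⟨gxw, gzw⟩
  by_contra hw
  have hwx : w ≠ x := gxw.ne'
  have hwz : w ≠ z := gzw.ne'
  have gyw : ¬G.Adj y w := fun h =>
    hK4 ⟨y, x, z, w, inj4 gxy.ne' gyz.ne (fun e => hw e.symm) hxz gxw.ne gzw.ne,
      gxy.symm, gyz, h, gxz, gxw, gzw⟩
  have tyw : ¬T.Adj y w := fun h => gyw (hle h)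
  rcases trich ht (distle hsp gxw) gxw.ne with txw | ⟨m, txm, tmw⟩
  · rcases trich ht (distle hsp gzw) gzw.ne with tzw | ⟨n, tzn, tnw⟩
    · exact twoMid ht txw tzw.symm txy tyz hxz hw
    · have hnx : x ≠ n := fun e => txz ((by rw [e]; exact tzn : T.Adj z x)).symm
      exact len_ne ht (path3 txw tnw.symm tzn.symm hnx hxz hwz)
        (path2 txy tyz hxz) (by simp)
  · rcases trich ht (distle hsp gzw) gzw.ne with tzw | ⟨n, tzn, tnw⟩
    · have hmz : m ≠ z := fun e => txz (by rw [← e]; exact txm)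
      exact len_ne ht (path3 txm tmw tzw.symm gxw.ne hxz hmz)
        (path2 txy tyz hxz) (by simp)
    · by_cases hmn : m = n
      · subst hmn
        have hmy : m ≠ y := fun e => tyw (by rw [← e]; exact tmw)
        exact twoMid ht txm tzn.symm txy tyz hxz hmy
      · have hmz : m ≠ z := fun e => txz (by rw [← e]; exact txm)
        have hxn : x ≠ n := fun e => txz ((by rw [e]; exact tzn : T.Adj z x)).symm
        exact len_ne ht (path4 txm tmw tnw.symm tzn.symm gxw.ne hxn hxz hmn hmz hwz)
          (path2 txy tyz hxz) (by simp)

end Stmt12Aux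

/-- An edge of `G` that lies in exactly one triangle of `G` (a boundary edge). -/
def IsBoundaryEdge {V : Type} (G : SimpleGraph V) (u v : V) : Prop :=
  G.Adj u v ∧ ∃! w : V, G.Adj u w ∧ G.Adj v w

/-- If `G` has no `K₄` and admits a tree 2-spanner, then every triangle of `G` has at least
one boundary edge, i.e. `G` has no crowned triangles. -/
theorem stmt_12 {V : Type} [Fintype V] (G : SimpleGraph V)
    (hK4 : ¬∃ a b c d : V, Function.Injective ![a, b, c, d] ∧
      G.Adj a b ∧ G.Adj a c ∧ G.Adj a d ∧ G.Adj b c ∧ G.Adj b d ∧ G.Adj c d)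
    (hT : ∃ T : SimpleGraph V, IsTree2Spanner G T)
    (a b c : V) (hab : G.Adj a b) (hbc : G.Adj b c) (hac : G.Adj a c) :
    IsBoundaryEdge G a b ∨ IsBoundaryEdge G b c ∨ IsBoundaryEdge G a c := by
  open Stmt12Aux in
  obtain ⟨T, hle, ht, hsp⟩ := hT
  by_cases tab : T.Adj a b
  · by_cases tbc : T.Adj b c
    · exact Or.inr (Or.inr (keyB G T hK4 hle ht hsp a b c hab hbc hac tab tbc))
    · by_cases tac : T.Adj a c
      · exact Or.inr (Or.inl (keyB G T hK4 hle ht hsp b a c hab.symm hac hbc tab.symm tac))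
      · exfalso
        rcases trich ht (distle hsp hbc) hbc.ne with h | ⟨m1, tbm1, tm1c⟩
        · exact tbc h
        rcases trich ht (distle hsp hac) hac.ne with h | ⟨m2, tam2, tm2c⟩
        · exact tac h
        by_cases hm : m1 = m2
        · subst hm
          exact len_ne ht (path1 tam2) (path2 tab tbm1 tam2.ne) (by simp)
        · have h1 : a ≠ m1 := fun e => tac (by rw [e]; exact tm1c)
          exact len_ne ht (path2 tam2 tm2c hac.ne)
            (path3 tab tbm1 tm1c h1 hac.ne hbc.ne) (by simp)
  · by_cases tbc : T.Adj b c
    · by_cases tac : T.Adj a c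
      · exact Or.inl (keyB G T hK4 hle ht hsp a c b hac hbc.symm hab tac tbc.symm)
      · exfalso
        rcases trich ht (distle hsp hab) hab.ne with h | ⟨m1, tam1, tm1b⟩
        · exact tab h
        rcases trich ht (distle hsp hac) hac.ne with h | ⟨m2, tam2, tm2c⟩
        · exact tac h
        by_cases hm : m1 = m2
        · subst hm
          exact len_ne ht (path1 tm2c) (path2 tm1b tbc tm2c.ne) (by simp)
        · have h1 : m1 ≠ c := fun e => tac (by rw [← e]; exact tam1)
          exact len_ne ht (path2 tam2 tm2c hac.ne)
            (path3 tam1 tm1b tbc hab.ne hac.ne h1) (by simp)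
    · by_cases tac : T.Adj a c
      · exfalso
        rcases trich ht (distle hsp hab) hab.ne with h | ⟨m1, tam1, tm1b⟩
        · exact tab h
        rcases trich ht (distle hsp hbc) hbc.ne with h | ⟨m2, tbm2, tm2c⟩
        · exact tbc h
        by_cases hm : m1 = m2
        · subst hm
          exact len_ne ht (path1 tac) (path2 tam1 tm2c hac.ne) (by simp)
        · have h1 : a ≠ m2 := fun e => tab (by rw [e]; exact tbm2.symm)
          exact len_ne ht (path2 tam1 tm1b hab.ne)
            (path3 tac tm2c.symm tbm2.symm h1 hab.ne hbc.ne') (by simp)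
      · exfalso
        rcases trich ht (distle hsp hab) hab.ne with h | ⟨m1, tam1, tm1b⟩
        · exact tab h
        rcases trich ht (distle hsp hbc) hbc.ne with h | ⟨m2, tbm2, tm2c⟩
        · exact tbc h
        rcases trich ht (distle hsp hac) hac.ne with h | ⟨m3, tam3, tm3c⟩
        · exact tac h
        have h13 : m1 = m3 := by
          by_contra hne
          have h1 : b ≠ m3 := fun e => tbc (by rw [e]; exact tm3c)
          have h2 : m1 ≠ c := fun e => tac (by rw [← e]; exact tam1)
          exact len_ne ht (path2 tbm2 tm2c hbc.ne)
            (path4 tm1b.symm tam1.symm tam3 tm3c hab.ne' h1 hbc.ne hne h2 hac.ne)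
            (by simp)
        subst h13
        have h23 : m2 = m1 := by
          by_contra hne
          exact twoMid ht tbm2 tm2c tm1b.symm tm3c hbc.ne hne
        exact hK4 ⟨m1, a, b, c, inj4 tam1.ne' tm1b.ne tm3c.ne hab.ne hac.ne hbc.ne,
          (hle tam1).symm, hle tm1b, hle tm3c, hab, hac, hbc⟩
end

section
/- Let Γ be a connected finite simple graph and let Λ be a connected subgraph of Γ with at least one edge. Let χ : BB(Γ) → ℝ be a nonzero character. Then χ(v·u⁻¹) = 0 for every edge (u,v) of Λ if and only if there exists a character χ̂ : A(Γ) → ℝ whose restriction to the subgroup BB(Γ) equals χ and such that χ̂(v) = 0 for every vertex v of Λ. -/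
/-!
For connected `Γ`, `BB(Γ)` is the normal closure in `A(Γ)` of the edge elements `b a⁻¹`: modulo
that normal closure all generators coincide, so the quotient map factors through `χ_Γ`. Writing
`g ∈ A(Γ)` as `y a^n` with `y ∈ BB(Γ)`, and using that `a` commutes with `b a⁻¹`, every character
of `BB(Γ)` is invariant under conjugation by `A(Γ)` on edge elements, hence everywhere. An invariant
character `χ` extends to `A(Γ)` by `v ↦ χ(v u⁻¹)`. Choosing `u ∈ Λ`, the extension vanishes on `Λ`
when `χ` vanishes on the edges of `Λ`, since along each edge its values differ by `χ(b a⁻¹)`.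
-/

theorem SimpleGraph.Preconnected.apply_eq_of_adj {V β : Type*} {G : SimpleGraph V}
    (hG : G.Preconnected) {f : V → β} (hf : ∀ a b, G.Adj a b → f a = f b) (u v : V) :
    f u = f v := by
  obtain ⟨p⟩ := hG u v
  induction p with
  | nil => rfl
  | cons hadj _ ih => exact (hf _ _ hadj).trans ih

namespace Subgroup

variable {A M : Type*} [Group A] [CommGroup M] {N : Subgroup A} [N.Normal] {s : Set A}

theorem eq_top_of_conjNormal_mem (hsN : s ⊆ N) (hN : N ≤ normalClosure s) (H : Subgroup N)
    (hH : ∀ (g : A), ∀ x ∈ H, MulAut.conjNormal g x ∈ H)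
    (hs : ∀ x (hx : x ∈ s), (⟨x, hsN hx⟩ : N) ∈ H) : H = ⊤ := by
  have : (H.map N.subtype).Normal := ⟨by
    rintro _ ⟨x, hx, rfl⟩ g
    exact ⟨_, hH g x hx, rfl⟩⟩
  have hle : N ≤ H.map N.subtype :=
    hN.trans (normalClosure_le_normal fun x hx => ⟨_, hs x hx, rfl⟩)
  refine eq_top_iff.2 fun x _ => ?_
  obtain ⟨y, hy, hyx⟩ := hle x.2
  rwa [← Subtype.ext hyx]

theorem map_conjNormal_of_mem (χ : N →* M) {y : A} (hy : y ∈ N) (x : N) :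
    χ (MulAut.conjNormal y x) = χ x := by
  rw [show y = ((⟨y, hy⟩ : N) : A) from rfl, MulAut.conjNormal_val, MulAut.conj_apply,
    map_mul, map_mul, map_inv, mul_inv_cancel_comm]

theorem map_conjNormal_of_le_normalClosure (hsN : s ⊆ N) (hN : N ≤ normalClosure s)
    (χ : N →* M)
    (hs : ∀ (g : A) x (hx : x ∈ s), χ (MulAut.conjNormal g ⟨x, hsN hx⟩) = χ ⟨x, hsN hx⟩)
    (g : A) (x : N) : χ (MulAut.conjNormal g x) = χ x := by
  let H : Subgroup N := ⨅ g : A, (χ.comp (MulAut.conjNormal g).toMonoidHom).eqLocus χ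
  have hH : H = ⊤ := by
    refine eq_top_of_conjNormal_mem hsN hN H (fun h x hx => mem_iInf.2 fun g => ?_)
      fun x hx => mem_iInf.2 fun g => hs g x hx
    have hx' (k : A) : χ (MulAut.conjNormal k x) = χ x := mem_iInf.1 hx k
    change χ (MulAut.conjNormal g (MulAut.conjNormal h x)) = χ (MulAut.conjNormal h x)
    rw [← MulAut.mul_apply, ← map_mul, hx', hx']
  exact mem_iInf.1 (hH ▸ mem_top x : x ∈ H) g

theorem comp_subtype_eq_of_le_normalClosure (hsN : s ⊆ N) (hN : N ≤ normalClosure s)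
    (χ : N →* M) (hχ : ∀ (g : A) (x : N), χ (MulAut.conjNormal g x) = χ x) (ψ : A →* M)
    (hs : ∀ x (hx : x ∈ s), ψ x = χ ⟨x, hsN hx⟩) : ψ.comp N.subtype = χ := by
  have hH : (ψ.comp N.subtype).eqLocus χ = ⊤ := by
    refine eq_top_of_conjNormal_mem hsN hN _ (fun g x hx => ?_) hs
    change ψ (g * x * g⁻¹) = χ (MulAut.conjNormal g x)
    rw [hχ, map_mul, map_mul, map_inv, mul_inv_cancel_comm]
    exact hx
  exact MonoidHom.ext fun x => (hH ▸ mem_top x : x ∈ _)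

end Subgroup

namespace RAAG

variable {V : Type} (G : SimpleGraph V)

instance : (BBG G).Normal := (bbgChar G).normal_ker

theorem bbgChar_raagGen (v : V) : bbgChar G (raagGen G v) = Multiplicative.ofAdd 1 :=
  PresentedGroup.toGroup.of _

theorem raagGen_mul_inv_mem_BBG (u v : V) : raagGen G v * (raagGen G u)⁻¹ ∈ BBG G := by
  change bbgChar G _ = 1
  simp [bbgChar_raagGen]

theorem commute_raagGen {a b : V} (h : G.Adj a b) : Commute (raagGen G a) (raagGen G b) := by
  rw [← commutatorElement_eq_one_iff_commute]
  exact (QuotientGroup.eq_one_iff _).2 (Subgroup.subset_normalClosure ⟨a, b, h, rfl⟩)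

theorem BBG_le_ker_of_raagGen_eq {H : Type*} [Group H] (φ : RAAG G →* H) (u : V)
    (hφ : ∀ v, φ (raagGen G v) = φ (raagGen G u)) : BBG G ≤ φ.ker := by
  have hfactor : φ = (zpowersHom H (φ (raagGen G u))).comp (bbgChar G) :=
    PresentedGroup.ext fun v => by
      change φ (raagGen G v) = zpowersHom H _ (bbgChar G (raagGen G v))
      rw [bbgChar_raagGen, zpowersHom_apply, toAdd_ofAdd, zpow_one, hφ]
  intro x hx
  rw [MonoidHom.mem_ker, hfactor, MonoidHom.comp_apply, show bbgChar G x = 1 from hx, map_one]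

def edgeElements : Set (RAAG G) :=
  {g | ∃ a b, G.Adj a b ∧ g = raagGen G b * (raagGen G a)⁻¹}

theorem edgeElements_subset_BBG : edgeElements G ⊆ BBG G := by
  rintro _ ⟨a, b, -, rfl⟩
  exact raagGen_mul_inv_mem_BBG G a b

theorem BBG_le_normalClosure_edgeElements (hG : G.Connected) :
    BBG G ≤ Subgroup.normalClosure (edgeElements G) := by
  let π := QuotientGroup.mk' (Subgroup.normalClosure (edgeElements G))
  have hadj (a b : V) (h : G.Adj a b) : π (raagGen G a) = π (raagGen G b) := by
    have : π (raagGen G b * (raagGen G a)⁻¹) = 1 :=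
      (QuotientGroup.eq_one_iff _).2 (Subgroup.subset_normalClosure ⟨a, b, h, rfl⟩)
    rw [map_mul, map_inv, mul_inv_eq_one] at this
    exact this.symm
  obtain ⟨u⟩ := hG.nonempty
  have := BBG_le_ker_of_raagGen_eq G π u fun v =>
    hG.preconnected.apply_eq_of_adj (f := fun v => π (raagGen G v)) hadj v u
  rwa [QuotientGroup.ker_mk'] at this

variable {M : Type*} [CommGroup M]

theorem map_conjNormal_edge (χ : BBG G →* M) {a b : V} (h : G.Adj a b) (g : RAAG G) :
    χ (MulAut.conjNormal g ⟨_, raagGen_mul_inv_mem_BBG G a b⟩) =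
      χ ⟨_, raagGen_mul_inv_mem_BBG G a b⟩ := by
  set n := Multiplicative.toAdd (bbgChar G g)
  have hy : g * raagGen G a ^ (-n) ∈ BBG G := by
    change bbgChar G _ = 1
    simp [bbgChar_raagGen, n, ← ofAdd_zsmul]
  have hcomm : Commute (raagGen G a ^ n) (raagGen G b * (raagGen G a)⁻¹) :=
    ((commute_raagGen G h).mul_right (Commute.refl _).inv_right).zpow_left n
  have hconj : MulAut.conjNormal (raagGen G a ^ n) ⟨_, raagGen_mul_inv_mem_BBG G a b⟩ =
      ⟨_, raagGen_mul_inv_mem_BBG G a b⟩ :=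
    Subtype.ext (by rw [MulAut.conjNormal_apply, hcomm.eq, mul_inv_cancel_right])
  rw [show g = g * raagGen G a ^ (-n) * raagGen G a ^ n by group, map_mul, MulAut.mul_apply,
    hconj, Subgroup.map_conjNormal_of_mem χ hy]

theorem map_conjNormal_BBG (hG : G.Connected) (χ : BBG G →* M) (g : RAAG G) (x : BBG G) :
    χ (MulAut.conjNormal g x) = χ x :=
  Subgroup.map_conjNormal_of_le_normalClosure (edgeElements_subset_BBG G)
    (BBG_le_normalClosure_edgeElements G hG) χ
    (by rintro g _ ⟨a, b, h, rfl⟩; exact map_conjNormal_edge G χ h g) g x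

theorem exists_extension (hG : G.Connected) (χ : BBG G →* M) (u : V) :
    ∃ ψ : RAAG G →* M, ψ.comp (BBG G).subtype = χ ∧
      ∀ v, ψ (raagGen G v) = χ ⟨_, raagGen_mul_inv_mem_BBG G u v⟩ := by
  let ψ : RAAG G →* M :=
    PresentedGroup.toGroup (f := fun v => χ ⟨_, raagGen_mul_inv_mem_BBG G u v⟩)
    (by rintro _ ⟨a, b, -, rfl⟩; simp)
  have hψ (v : V) : ψ (raagGen G v) = χ ⟨_, raagGen_mul_inv_mem_BBG G u v⟩ :=
    PresentedGroup.toGroup.of _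
  refine ⟨ψ, Subgroup.comp_subtype_eq_of_le_normalClosure (edgeElements_subset_BBG G)
    (BBG_le_normalClosure_edgeElements G hG) χ (map_conjNormal_BBG G hG χ) ψ ?_, hψ⟩
  rintro _ ⟨a, b, -, rfl⟩
  rw [map_mul, map_inv, hψ, hψ, ← map_inv, ← map_mul]
  congr 1
  exact Subtype.ext (by simp only [Subgroup.coe_mul, Subgroup.coe_inv]; group)

end RAAG

theorem stmt_15_general {V : Type} (G : SimpleGraph V) (hG : G.Connected)
    (Λ : G.Subgraph) (hΛ : Λ.Connected) (hedge : ∃ u v : V, Λ.Adj u v)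
    (χ : ↥(BBG G) →* Multiplicative ℝ) :
    (∀ u v : V, Λ.Adj u v →
      ∀ hm : raagGen G v * (raagGen G u)⁻¹ ∈ BBG G,
        χ ⟨raagGen G v * (raagGen G u)⁻¹, hm⟩ = 1) ↔
    (∃ χext : RAAG G →* Multiplicative ℝ,
      χext.comp (BBG G).subtype = χ ∧ ∀ v ∈ Λ.verts, χext (raagGen G v) = 1) := by
  constructor
  · intro hvanish
    obtain ⟨u, w, huw⟩ := hedge
    obtain ⟨ψ, hψχ, hψ⟩ := RAAG.exists_extension G hG χ u
    have hψΛ (a b : Λ.verts) (h : Λ.coe.Adj a b) : ψ (raagGen G a) = ψ (raagGen G b) := by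
      have hab := congr($hψχ ⟨_, RAAG.raagGen_mul_inv_mem_BBG G a b⟩)
      rw [hvanish a b h] at hab
      exact (mul_inv_eq_one.1 (by simpa using hab)).symm
    refine ⟨ψ, hψχ, fun v hv => ?_⟩
    rw [hΛ.coe.preconnected.apply_eq_of_adj (f := fun a : Λ.verts => ψ (raagGen G a)) hψΛ ⟨v, hv⟩
      ⟨u, huw.fst_mem⟩, hψ]
    exact (congrArg χ (Subtype.ext (mul_inv_cancel _))).trans (map_one χ)
  · rintro ⟨ψ, hψχ, hψ⟩ u v huv hm
    rw [← hψχ, MonoidHom.comp_apply, Subgroup.coe_subtype, map_mul, map_inv, hψ v huv.snd_mem,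
      hψ u huv.fst_mem, inv_one, mul_one]

/-- Let `Λ` be a connected subgraph of a connected graph `Γ` with at least one edge, and let
`χ` be a nonzero character of `BB(Γ)`. Then `χ` vanishes on (the group elements corresponding
to) all edges of `Λ` iff it admits an extension to a character of `A(Γ)` vanishing on all
vertices of `Λ`. -/
theorem stmt_15 {V : Type} [Fintype V] (G : SimpleGraph V) (hG : G.Connected)
    (Λ : G.Subgraph) (hΛ : Λ.Connected) (hedge : ∃ u v : V, Λ.Adj u v)
    (χ : ↥(BBG G) →* Multiplicative ℝ) (hχ : χ ≠ 1) :
    (∀ u v : V, Λ.Adj u v →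
      ∀ hm : raagGen G v * (raagGen G u)⁻¹ ∈ BBG G,
        χ ⟨raagGen G v * (raagGen G u)⁻¹, hm⟩ = 1) ↔
    (∃ χext : RAAG G →* Multiplicative ℝ,
      χext.comp (BBG G).subtype = χ ∧ ∀ v ∈ Λ.verts, χext (raagGen G v) = 1) :=
  stmt_15_general G hG Λ hΛ hedge χ
end
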